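/- arXiv:2506.17401 — 9 statements merged into one kernel-verified Lean document; each statement's English description precedes it below -/
import Mathlib

section
/- Let r1, r2 be non-negative integers with r := r1 + r2 ≥ 1, and let G = Z_{2^{α1}} ⊕ ... ⊕ Z_{2^{α_{r1}}} ⊕ Z_2^{r2} with α1 ≥ ... ≥ α_{r1} ≥ 2. Then the number of index-2 subgroups of G having rank r is 2^{r1} − 1, and the number of index-2 subgroups of G having rank r − 1 is 2^r − 2^{r1}. -/
/-- A finite abelian 2-group has rank `ρ` iff it has exactly `2^ρ - 1` elements of
order 2 (an element `x` has order 2 iff `x ≠ 0` and `x + x = 0`). -/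
def HasRank2Group (H : Type*) [AddGroup H] (ρ : ℕ) : Prop :=
  Nat.card {x : H // x ≠ 0 ∧ x + x = 0} = 2 ^ ρ - 1

/-!
Index-2 subgroups of `G` are exactly the kernels of the nonzero homomorphisms `φ : G →+ ZMod 2`.
The 2-torsion of `ker φ` is `G[2] ⊓ ker φ`: all of `G[2]`, of order `2 ^ r`, if `φ` vanishes on
`G[2]`, and a subgroup of index 2 of it otherwise. So `ker φ` has rank `r` or `r - 1` according
as `φ` kills `G[2]` or not. Since every `α i ≥ 2`, the 2-torsion of the cyclic factors consists
of doubles, on which `φ` vanishes automatically; hence `φ` kills `G[2]` iff it kills the factor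
`(ZMod 2) ^ r2`. Of the `2 ^ r` homomorphisms `G →+ ZMod 2`, exactly `2 ^ r1` do so.
-/

open AddSubgroup

theorem Nat.card_subtype_ne_and {α : Type*} [Finite α] {p : α → Prop} {a : α} (ha : p a) :
    Nat.card {x // x ≠ a ∧ p x} = Nat.card {x // p x} - 1 := by
  have hset : {x | x ≠ a ∧ p x} = {x | p x} \ {a} := by
    ext x; simp [and_comm]
  rw [← Set.coe_ofPred, hset, Nat.card_coe_set_eq,
    Set.ncard_sdiff_singleton_of_mem (s := {x | p x}) ha, ← Nat.card_coe_set_eq, Set.coe_ofPred]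

theorem Nat.card_subtype_ne_and_not {α : Type*} [Finite α] {p : α → Prop} {a : α} (ha : p a) :
    Nat.card {x // x ≠ a ∧ ¬ p x} = Nat.card α - Nat.card {x // p x} := by
  have hset : {x | x ≠ a ∧ ¬ p x} = Set.univ \ {x | p x} := by
    ext x; simp only [Set.mem_ofPred_eq, Set.mem_sdiff, Set.mem_univ, true_and]
    exact ⟨And.right, fun h => ⟨fun hx => h (hx ▸ ha), h⟩⟩
  rw [← Set.coe_ofPred, hset, Nat.card_coe_set_eq, Set.ncard_sdiff (Set.subset_univ _),
    Set.ncard_univ, ← Nat.card_coe_set_eq, Set.coe_ofPred]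

section Torsion

variable {G G' : Type*} [AddCommGroup G] [AddCommGroup G']

theorem AddSubgroup.mem_torsionBy_two {x : G} : x ∈ torsionBy G 2 ↔ x + x = 0 := by
  rw [← two_nsmul]
  exact torsionBy.nsmul_iff

theorem AddSubgroup.torsionBy_two_eq_top [Module (ZMod 2) G] : torsionBy G 2 = ⊤ :=
  eq_top_iff.2 fun x _ => mem_torsionBy_two.2 (ZModModule.add_self x)

theorem AddSubgroup.card_torsionBy_prod (n : ℤ) :
    Nat.card (torsionBy (G × G') n) = Nat.card (torsionBy G n) * Nat.card (torsionBy G' n) := by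
  rw [← Nat.card_prod]
  exact Nat.card_congr <| (Equiv.subtypeEquivRight fun x => by simp [Prod.ext_iff]).trans
    Equiv.subtypeProdEquivProd

theorem AddSubgroup.card_torsionBy_pi {ι : Type*} [Fintype ι] {M : ι → Type*}
    [∀ i, AddCommGroup (M i)] (n : ℤ) :
    Nat.card (torsionBy (∀ i, M i) n) = ∏ i, Nat.card (torsionBy (M i) n) := by
  rw [← Nat.card_pi]
  exact Nat.card_congr <| (Equiv.subtypeEquivRight fun x => by simp [funext_iff]).trans
    Equiv.subtypePiEquivPi

theorem AddSubgroup.card_torsionBy_ker_mul_card_map (f : G →+ G') (n : ℤ) :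
    Nat.card (torsionBy f.ker n) * Nat.card ((torsionBy G n).map f) =
      Nat.card (torsionBy G n) := by
  have hker : Nat.card (torsionBy f.ker n) = Nat.card (f.ker ⊓ torsionBy G n :) := by
    rw [← card_map_of_injective f.ker.subtype_injective]
    congr 2
    ext x
    simp [Subtype.ext_iff, and_comm]
  rw [hker, ← relIndex_ker, ← inf_relIndex_right, ← relIndex_bot_left, ← relIndex_bot_left,
    relIndex_mul_relIndex _ _ _ bot_le inf_le_right]

end Torsion

namespace ZMod

theorem add_self_eq_zero_iff {m : ℕ} (hm : m ≠ 0) {x : ZMod (2 * m)} :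
    x + x = 0 ↔ x = 0 ∨ x = m := by
  have hm2 : ((m : ZMod (2 * m)) + m) = 0 := by
    rw [← Nat.cast_add, ← two_mul, natCast_self]
  refine ⟨fun hx => ?_, by rintro (rfl | rfl) <;> simp [hm2]⟩
  have : NeZero (2 * m) := ⟨by omega⟩
  have hdvd : 2 * m ∣ 2 * x.val := by
    rw [← natCast_eq_zero_iff, Nat.cast_mul, natCast_zmod_val, Nat.cast_ofNat]
    linear_combination hx
  obtain ⟨k, hk⟩ := Nat.dvd_of_mul_dvd_mul_left two_pos hdvd
  have hk2 : k < 2 := by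
    have := x.val_lt
    by_contra!
    nlinarith
  rw [← natCast_zmod_val x, hk]
  interval_cases k <;> simp

theorem card_torsionBy_two_two_mul {m : ℕ} (hm : m ≠ 0) :
    Nat.card (torsionBy (ZMod (2 * m)) 2) = 2 := by
  have hset : (torsionBy (ZMod (2 * m)) 2 : Set (ZMod (2 * m))) = {0, (m : ZMod (2 * m))} := by
    ext x
    simp only [SetLike.mem_coe, mem_torsionBy_two, add_self_eq_zero_iff hm, Set.mem_insert_iff,
      Set.mem_singleton_iff]
  have hm0 : (0 : ZMod (2 * m)) ≠ m := by
    rw [ne_comm, Ne, natCast_eq_zero_iff]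
    exact fun h => by have := Nat.le_of_dvd (by omega) h; omega
  rw [← SetLike.coe_sort_coe, hset, Nat.card_coe_set_eq, Set.ncard_pair hm0]

theorem card_torsionBy_two_two_pow {a : ℕ} (ha : a ≠ 0) :
    Nat.card (torsionBy (ZMod (2 ^ a)) 2) = 2 := by
  obtain ⟨b, rfl⟩ := Nat.exists_eq_succ_of_ne_zero ha
  rw [pow_succ']
  exact card_torsionBy_two_two_mul (pow_ne_zero b two_ne_zero)

theorem exists_add_self_eq_of_add_self_eq_zero {m : ℕ} (hm : m ≠ 0) (hm2 : Even m)
    {x : ZMod (2 * m)} (hx : x + x = 0) : ∃ y, y + y = x := by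
  obtain ⟨k, rfl⟩ := hm2
  rcases (add_self_eq_zero_iff hm).1 hx with rfl | rfl
  · exact ⟨0, add_zero 0⟩
  · exact ⟨k, by push_cast; rfl⟩

theorem exists_add_self_eq_of_add_self_eq_zero_of_two_le {a : ℕ} (ha : 2 ≤ a) :
    ∀ x : ZMod (2 ^ a), x + x = 0 → ∃ y, y + y = x := by
  obtain ⟨b, rfl⟩ := Nat.exists_eq_add_of_le' ha
  rw [pow_succ']
  exact fun x => exists_add_self_eq_of_add_self_eq_zero (by positivity)
    ((Nat.even_pow' (by omega)).2 even_two)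

theorem card_addMonoidHom_zmod_two {n : ℕ} (hn : 2 ∣ n) : Nat.card (ZMod n →+ ZMod 2) = 2 := by
  have hf (f : ℤ →+ ZMod 2) : f n = 0 := by
    obtain ⟨k, rfl⟩ := hn
    rw [← nsmul_one, map_nsmul, mul_nsmul', two_nsmul, ZModModule.add_self]
  rw [← Nat.card_congr ((zmultiplesHom (ZMod 2)).trans
    ((Equiv.subtypeUnivEquiv hf).symm.trans (ZMod.lift n))), Nat.card_zmod]

end ZMod

theorem AddSubgroup.eq_bot_or_eq_top_zmod_two (K : AddSubgroup (ZMod 2)) : K = ⊥ ∨ K = ⊤ :=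
  have : Fact (Nat.card (ZMod 2)).Prime := ⟨by rw [Nat.card_zmod]; exact Nat.prime_two⟩
  eq_bot_or_eq_top_of_prime_card K

section IndexTwo

variable {G : Type*} [AddCommGroup G]

theorem AddMonoidHom.ker_index_eq_two {φ : G →+ ZMod 2} (hφ : φ ≠ 0) : φ.ker.index = 2 := by
  rw [index_ker]
  rcases eq_bot_or_eq_top_zmod_two φ.range with h | h
  · exact absurd (range_eq_bot_iff.1 h) hφ
  · rw [h, card_top, Nat.card_zmod]

theorem AddMonoidHom.ker_injective_zmod_two :
    Function.Injective (AddMonoidHom.ker : (G →+ ZMod 2) → AddSubgroup G) := by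
  intro φ ψ h
  ext x
  have hx : φ x = 0 ↔ ψ x = 0 := by rw [← mem_ker, ← mem_ker, h]
  generalize φ x = a, ψ x = b at hx
  revert a b
  decide

theorem AddSubgroup.exists_ker_eq_of_index_eq_two {H : AddSubgroup G} (hH : H.index = 2) :
    ∃ φ : G →+ ZMod 2, φ.ker = H := by
  have : Fact (Nat.Prime 2) := ⟨Nat.prime_two⟩
  let e : G ⧸ H ≃+ ZMod 2 := (zmodAddCyclicAddEquiv (isAddCyclic_of_prime_card hH)).symm.trans
    (ZMod.ringEquivCongr hH).toAddEquiv
  refine ⟨e.toAddMonoidHom.comp (QuotientAddGroup.mk' H), ?_⟩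
  ext x
  simp

theorem AddSubgroup.card_index_eq_two (P : AddSubgroup G → Prop) :
    Nat.card {H : AddSubgroup G // H.index = 2 ∧ P H} =
      Nat.card {φ : G →+ ZMod 2 // φ ≠ 0 ∧ P φ.ker} := by
  refine (Nat.card_eq_of_bijective (fun φ => ⟨φ.1.ker, φ.1.ker_index_eq_two φ.2.1, φ.2.2⟩)
    ⟨fun φ ψ h => Subtype.ext (AddMonoidHom.ker_injective_zmod_two (congrArg Subtype.val h)),
      ?_⟩).symm
  rintro ⟨H, hH, hP⟩
  obtain ⟨φ, rfl⟩ := exists_ker_eq_of_index_eq_two hH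
  refine ⟨⟨φ, fun h => ?_, hP⟩, rfl⟩
  rw [h, AddMonoidHom.ker_zero, index_top] at hH
  exact absurd hH (by decide)

end IndexTwo

section Rank

variable {G : Type*} [AddCommGroup G] [Finite G]

theorem hasRank2Group_iff_card_torsionBy {ρ : ℕ} :
    HasRank2Group G ρ ↔ Nat.card (torsionBy G 2) = 2 ^ ρ := by
  have hT : Nat.card {x : G // x + x = 0} = Nat.card (torsionBy G 2) :=
    Nat.card_congr (Equiv.subtypeEquivRight fun _ => mem_torsionBy_two.symm)
  have : 0 < Nat.card (torsionBy G 2) := Nat.card_pos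
  have : 0 < 2 ^ ρ := by positivity
  rw [HasRank2Group, Nat.card_subtype_ne_and (p := fun x : G => x + x = 0) (add_zero 0), hT]
  omega

theorem hasRank2Group_ker_iff {r : ℕ} (hT : Nat.card (torsionBy G 2) = 2 ^ r) (hr : r ≠ 0)
    (φ : G →+ ZMod 2) :
    (HasRank2Group φ.ker r ↔ torsionBy G 2 ≤ φ.ker) ∧
      (HasRank2Group φ.ker (r - 1) ↔ ¬ torsionBy G 2 ≤ φ.ker) := by
  have key := card_torsionBy_ker_mul_card_map φ 2
  have hpow : 2 ^ r = 2 ^ (r - 1) * 2 := by rw [← pow_succ]; congr; omega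
  have hlt : 2 ^ (r - 1) < 2 ^ r := Nat.pow_lt_pow_right (by norm_num) (by omega)
  rw [hasRank2Group_iff_card_torsionBy, hasRank2Group_iff_card_torsionBy,
    ← AddSubgroup.map_eq_bot_iff]
  rcases eq_bot_or_eq_top_zmod_two ((torsionBy G 2).map φ) with h | h <;> rw [h] at key ⊢
  · rw [card_bot, mul_one, hT] at key
    rw [key]
    exact ⟨iff_of_true rfl rfl, iff_of_false hlt.ne' (not_not.2 rfl)⟩
  · rw [card_top, Nat.card_zmod, hT, hpow] at key
    rw [Nat.eq_of_mul_eq_mul_right two_pos key]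
    exact ⟨iff_of_false hlt.ne top_ne_bot, iff_of_true rfl top_ne_bot⟩

end Rank

section Hom

variable {M N A : Type*} [AddCommGroup M] [AddCommGroup N] [AddCommGroup A]

instance AddMonoidHom.finite [Finite M] [Finite A] : Finite (M →+ A) :=
  Finite.of_injective _ DFunLike.coe_injective

theorem Nat.card_addMonoidHom_prod :
    Nat.card (M × N →+ A) = Nat.card (M →+ A) * Nat.card (N →+ A) := by
  rw [← Nat.card_prod]
  exact Nat.card_congr
    { toFun φ := (φ.comp (.inl M N), φ.comp (.inr M N))
      invFun p := p.1.coprod p.2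
      left_inv := AddMonoidHom.coprod_unique
      right_inv p := by simp }

theorem Nat.card_addMonoidHom_pi {ι : Type*} [Fintype ι] [DecidableEq ι] {M : ι → Type*}
    [∀ i, AddCommGroup (M i)] :
    Nat.card ((∀ i, M i) →+ A) = ∏ i, Nat.card (M i →+ A) := by
  rw [← Nat.card_pi]
  exact Nat.card_congr ((Equiv.subtypeUnivEquiv fun _ _ _ _ _ _ => AddCommute.all _ _).symm.trans
    AddMonoidHom.noncommPiCoprodEquiv).symm

theorem Nat.card_addMonoidHom_comp_inr_eq_zero :
    Nat.card {φ : M × N →+ A // φ.comp (.inr M N) = 0} = Nat.card (M →+ A) :=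
  Nat.card_congr
    { toFun φ := φ.1.comp (.inl M N)
      invFun f := ⟨f.comp (.fst M N), by ext; simp⟩
      left_inv φ := Subtype.ext <| by
        conv_rhs => rw [← AddMonoidHom.coprod_unique φ.1, φ.2]
        ext; simp
      right_inv f := by ext; simp }

theorem Nat.card_addMonoidHom_ne_zero_and_comp_inr_eq_zero [Finite M] [Finite N] [Finite A] :
    Nat.card {φ : M × N →+ A // φ ≠ 0 ∧ φ.comp (.inr M N) = 0} = Nat.card (M →+ A) - 1 := by
  rw [Nat.card_subtype_ne_and (p := fun φ : M × N →+ A => φ.comp (.inr M N) = 0)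
    (AddMonoidHom.zero_comp _), Nat.card_addMonoidHom_comp_inr_eq_zero]

theorem Nat.card_addMonoidHom_ne_zero_and_comp_inr_ne_zero [Finite M] [Finite N] [Finite A] :
    Nat.card {φ : M × N →+ A // φ ≠ 0 ∧ ¬ φ.comp (.inr M N) = 0} =
      Nat.card (M →+ A) * Nat.card (N →+ A) - Nat.card (M →+ A) := by
  rw [Nat.card_subtype_ne_and_not (p := fun φ : M × N →+ A => φ.comp (.inr M N) = 0)
    (AddMonoidHom.zero_comp _), Nat.card_addMonoidHom_comp_inr_eq_zero,
    Nat.card_addMonoidHom_prod]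

theorem AddSubgroup.torsionBy_two_le_ker_iff [Module (ZMod 2) N]
    (hM : ∀ x : M, x + x = 0 → ∃ y, y + y = x) (φ : M × N →+ ZMod 2) :
    torsionBy (M × N) 2 ≤ φ.ker ↔ φ.comp (.inr M N) = 0 := by
  refine ⟨fun h => ?_, fun h x hx => ?_⟩
  · ext y
    exact h (mem_torsionBy_two.2 (by simp [ZModModule.add_self]))
  · obtain ⟨y, hy⟩ := hM x.1 (congrArg Prod.fst (mem_torsionBy_two.1 hx))
    have hsplit : x = (y, 0) + (y, 0) + (0, x.2) := by ext <;> simp [hy]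
    rw [AddMonoidHom.mem_ker, hsplit, map_add, map_add, ZModModule.add_self, zero_add]
    exact DFunLike.congr_fun h x.2

end Hom

section CyclicFactors

variable {ι : Type*} {α : ι → ℕ}

theorem card_torsionBy_two_pi_zmod_two_pow [Fintype ι] (hα : ∀ i, α i ≠ 0) :
    Nat.card (torsionBy (∀ i, ZMod (2 ^ α i)) 2) = 2 ^ Fintype.card ι := by
  rw [card_torsionBy_pi, Finset.prod_congr rfl fun i _ => ZMod.card_torsionBy_two_two_pow (hα i),
    Finset.prod_const, Finset.card_univ]

theorem card_addMonoidHom_pi_zmod_zmod_two [Fintype ι] [DecidableEq ι] {n : ι → ℕ}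
    (hn : ∀ i, 2 ∣ n i) :
    Nat.card ((∀ i, ZMod (n i)) →+ ZMod 2) = 2 ^ Fintype.card ι := by
  rw [Nat.card_addMonoidHom_pi, Finset.prod_congr rfl fun i _ =>
    ZMod.card_addMonoidHom_zmod_two (hn i), Finset.prod_const, Finset.card_univ]

theorem exists_add_self_eq_pi_zmod_two_pow (hα : ∀ i, 2 ≤ α i) (x : ∀ i, ZMod (2 ^ α i))
    (hx : x + x = 0) : ∃ y, y + y = x := by
  choose y hy using fun i =>
    ZMod.exists_add_self_eq_of_add_self_eq_zero_of_two_le (hα i) (x i) (congrFun hx i)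
  exact ⟨y, funext hy⟩

end CyclicFactors

theorem stmt4_general (r1 r2 : ℕ) (hr : 1 ≤ r1 + r2) (α : Fin r1 → ℕ)
    (hα : ∀ i, 2 ≤ α i) :
    Nat.card {H : AddSubgroup ((∀ i : Fin r1, ZMod (2 ^ α i)) × (Fin r2 → ZMod 2)) //
        H.index = 2 ∧ HasRank2Group H (r1 + r2)} = 2 ^ r1 - 1 ∧
    Nat.card {H : AddSubgroup ((∀ i : Fin r1, ZMod (2 ^ α i)) × (Fin r2 → ZMod 2)) //
        H.index = 2 ∧ HasRank2Group H (r1 + r2 - 1)} = 2 ^ (r1 + r2) - 2 ^ r1 := by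
  have hT : Nat.card (torsionBy ((∀ i : Fin r1, ZMod (2 ^ α i)) × (Fin r2 → ZMod 2)) 2) =
      2 ^ (r1 + r2) := by
    rw [card_torsionBy_prod, card_torsionBy_two_pi_zmod_two_pow fun i => by have := hα i; omega,
      torsionBy_two_eq_top, card_top, Nat.card_fun, Nat.card_zmod, Fintype.card_fin,
      Nat.card_fin, pow_add]
  simp only [card_index_eq_two, (hasRank2Group_ker_iff hT (by omega) _).1,
    (hasRank2Group_ker_iff hT (by omega) _).2,
    torsionBy_two_le_ker_iff (exists_add_self_eq_pi_zmod_two_pow hα)]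
  rw [Nat.card_addMonoidHom_ne_zero_and_comp_inr_eq_zero,
    Nat.card_addMonoidHom_ne_zero_and_comp_inr_ne_zero,
    card_addMonoidHom_pi_zmod_zmod_two fun i => dvd_pow_self 2 (by have := hα i; omega),
    card_addMonoidHom_pi_zmod_zmod_two (n := fun _ => 2) fun _ => dvd_rfl, Fintype.card_fin,
    Fintype.card_fin, pow_add]
  exact ⟨rfl, rfl⟩

/-- For `G = Z_{2^{α1}} ⊕ ... ⊕ Z_{2^{α_{r1}}} ⊕ Z_2^{r2}` with
`α1 ≥ ... ≥ α_{r1} ≥ 2` and `r := r1 + r2 ≥ 1`, there are exactly `2^{r1} - 1`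
index-2 subgroups of rank `r`, and exactly `2^r - 2^{r1}` index-2 subgroups of
rank `r - 1`. -/
theorem stmt4 (r1 r2 : ℕ) (hr : 1 ≤ r1 + r2) (α : Fin r1 → ℕ)
    (hmono : Antitone α) (hα : ∀ i, 2 ≤ α i) :
    Nat.card {H : AddSubgroup ((∀ i : Fin r1, ZMod (2 ^ α i)) × (Fin r2 → ZMod 2)) //
        H.index = 2 ∧ HasRank2Group H (r1 + r2)} = 2 ^ r1 - 1 ∧
    Nat.card {H : AddSubgroup ((∀ i : Fin r1, ZMod (2 ^ α i)) × (Fin r2 → ZMod 2)) //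
        H.index = 2 ∧ HasRank2Group H (r1 + r2 - 1)} = 2 ^ (r1 + r2) - 2 ^ r1 :=
  stmt4_general r1 r2 hr α hα
end

section
/- Let G be a finite abelian group of rank r (as a 2-group part) written as G = Z_{2^{α1}} ⊕ ... ⊕ Z_{2^{α_{r1}}} ⊕ Z_2^{r2} with α_i ≥ 2. If H ≤ G is an index-2 subgroup of rank r1 + r2, then the map H ↦ 2H is a bijection between the set of index-2 subgroups of G of full rank and the set of index-2 subgroups of 2G. -/
/-- The doubling homomorphism `g ↦ g + g = 2g` of an abelian group. -/
def doubleHom (G : Type*) [AddCommGroup G] : G →+ G :=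
  AddMonoidHom.id G + AddMonoidHom.id G

/-!
Write `D : G → G, g ↦ 2g`. Since every `α i ≥ 1`, each cyclic factor of `G` has exactly
two solutions of `2x = 0`, so `ker D` has `2 ^ (r1 + r2)` elements and a subgroup `H` has full
rank exactly when it contains `ker D`. By the correspondence theorem for `D : G → 2G`,
`H ↦ D(H) = 2H` is a bijection from the subgroups containing `ker D` onto the subgroups of `2G`,
and `[G : H] = [2G : 2H]`.
-/

theorem AddSubgroup.bijOn_map_of_ker_le {G G' : Type*} [AddGroup G] [AddGroup G'] (f : G →+ G')
    (n : ℕ) :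
    Set.BijOn (AddSubgroup.map f) {H | f.ker ≤ H ∧ H.index = n}
      {K | K ≤ f.range ∧ K.relIndex f.range = n} := by
  refine ⟨?_, ?_, ?_⟩
  · rintro H ⟨hker, rfl⟩
    exact ⟨map_le_range f H, by rw [← index_comap, comap_map_eq_self hker]⟩
  · rintro H₁ ⟨hker₁, -⟩ H₂ ⟨hker₂, -⟩ h
    rw [← comap_map_eq_self hker₁, ← comap_map_eq_self hker₂, h]
  · rintro K ⟨hle, rfl⟩
    exact ⟨K.comap f, ⟨ker_le_comap f K, index_comap K f⟩, map_comap_eq_self hle⟩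

section doubleHom

variable {G : Type*} [AddCommGroup G]

@[simp]
theorem doubleHom_apply (x : G) : doubleHom G x = x + x := rfl

theorem hasRank2Group_iff_card_ker_doubleHom [Finite G] {ρ : ℕ} :
    HasRank2Group G ρ ↔ Nat.card (doubleHom G).ker = 2 ^ ρ := by
  have hcard : Nat.card {x : G // x ≠ 0 ∧ x + x = 0} = Nat.card (doubleHom G).ker - 1 := by
    rw [← SetLike.coe_sort_coe, Nat.card_coe_set_eq,
      ← Set.ncard_sdiff_singleton_of_mem (zero_mem (doubleHom G).ker), ← Nat.card_coe_set_eq]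
    exact Nat.card_congr (Equiv.subtypeEquivRight fun x => by simp [and_comm])
  have := Nat.card_pos (α := (doubleHom G).ker)
  have := Nat.one_le_two_pow (n := ρ)
  rw [HasRank2Group, hcard]
  omega

theorem card_ker_doubleHom_addSubgroup (H : AddSubgroup G) :
    Nat.card (doubleHom H).ker = Nat.card ((doubleHom G).ker ⊓ H : AddSubgroup G) := by
  have hmap : (doubleHom H).ker.map H.subtype = (doubleHom G).ker ⊓ H := by
    ext x
    simp [and_comm]
  rw [← hmap, AddSubgroup.card_map_of_injective H.subtype_injective]

theorem hasRank2Group_addSubgroup_iff [Finite G] {ρ : ℕ} (hG : HasRank2Group G ρ)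
    {H : AddSubgroup G} : HasRank2Group H ρ ↔ (doubleHom G).ker ≤ H := by
  rw [hasRank2Group_iff_card_ker_doubleHom] at hG ⊢
  rw [card_ker_doubleHom_addSubgroup, ← hG, ← inf_eq_left]
  exact ⟨fun h => AddSubgroup.eq_of_le_of_card_ge inf_le_left h.ge, fun h => by rw [h]⟩

end doubleHom

theorem card_ker_doubleHom_prod (A B : Type*) [AddCommGroup A] [AddCommGroup B] :
    Nat.card (doubleHom (A × B)).ker =
      Nat.card (doubleHom A).ker * Nat.card (doubleHom B).ker := by
  rw [← Nat.card_prod]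
  exact Nat.card_congr <| (Equiv.subtypeEquivRight fun x => by simp [Prod.ext_iff]).trans
    Equiv.subtypeProdEquivProd

theorem card_ker_doubleHom_pi {ι : Type*} [Fintype ι] (A : ι → Type*)
    [∀ i, AddCommGroup (A i)] :
    Nat.card (doubleHom (∀ i, A i)).ker = ∏ i, Nat.card (doubleHom (A i)).ker := by
  rw [← Nat.card_pi]
  exact Nat.card_congr <| (Equiv.subtypeEquivRight fun x => by simp [funext_iff]).trans
    Equiv.subtypePiEquivPi

theorem card_ker_doubleHom_zmod {n : ℕ} (hn : Even n) (hn0 : n ≠ 0) :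
    Nat.card (doubleHom (ZMod n)).ker = 2 := by
  obtain ⟨m, rfl⟩ := hn
  have : NeZero (m + m) := ⟨hn0⟩
  have hm : m < m + m := by omega
  have hker :
      ((doubleHom (ZMod (m + m))).ker : Set (ZMod (m + m))) = {0, (m : ZMod (m + m))} := by
    ext x
    simp only [SetLike.mem_coe, AddMonoidHom.mem_ker, doubleHom_apply, Set.mem_insert_iff,
      Set.mem_singleton_iff, ← neg_eq_iff_add_eq_zero, ZMod.neg_eq_self_iff]
    refine or_congr Iff.rfl ⟨fun h => ?_, fun h => ?_⟩
    · rw [← ZMod.natCast_zmod_val x]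
      congr 1
      omega
    · rw [h, ZMod.val_cast_of_lt hm]
      ring
  have hne : (0 : ZMod (m + m)) ≠ m := by
    intro h
    have := congrArg ZMod.val h
    rw [ZMod.val_zero, ZMod.val_cast_of_lt hm] at this
    omega
  rw [← SetLike.coe_sort_coe, Nat.card_coe_set_eq, hker, Set.ncard_pair hne]

theorem hasRank2Group_pi_zmod_two_pow_prod (r1 r2 : ℕ) (α : Fin r1 → ℕ)
    (hα : ∀ i, 1 ≤ α i) :
    HasRank2Group ((∀ i : Fin r1, ZMod (2 ^ α i)) × (Fin r2 → ZMod 2)) (r1 + r2) := by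
  have hzmod (k : ℕ) (hk : 1 ≤ k) : Nat.card (doubleHom (ZMod (2 ^ k))).ker = 2 :=
    card_ker_doubleHom_zmod ((Nat.even_pow' (by omega)).mpr even_two) (by positivity)
  rw [hasRank2Group_iff_card_ker_doubleHom, card_ker_doubleHom_prod, card_ker_doubleHom_pi,
    card_ker_doubleHom_pi, Finset.prod_congr rfl fun i _ => hzmod _ (hα i),
    card_ker_doubleHom_zmod even_two two_ne_zero]
  simp [pow_add]

theorem stmt5_general (r1 r2 : ℕ) (α : Fin r1 → ℕ)
    (hα : ∀ i, 2 ≤ α i) :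
    Set.BijOn
      (fun H : AddSubgroup ((∀ i : Fin r1, ZMod (2 ^ α i)) × (Fin r2 → ZMod 2)) =>
        AddSubgroup.map (doubleHom _) H)
      {H | H.index = 2 ∧ HasRank2Group H (r1 + r2)}
      {H' | H' ≤ (doubleHom ((∀ i : Fin r1, ZMod (2 ^ α i)) × (Fin r2 → ZMod 2))).range ∧
        H'.relIndex (doubleHom ((∀ i : Fin r1, ZMod (2 ^ α i)) × (Fin r2 → ZMod 2))).range = 2} := by
  have hG := hasRank2Group_pi_zmod_two_pow_prod r1 r2 α fun i => one_le_two.trans (hα i)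
  convert AddSubgroup.bijOn_map_of_ker_le
    (doubleHom ((∀ i : Fin r1, ZMod (2 ^ α i)) × (Fin r2 → ZMod 2))) 2 using 2 with H
  simp only [hasRank2Group_addSubgroup_iff hG, and_comm]

/-- For `G = Z_{2^{α1}} ⊕ ... ⊕ Z_{2^{α_{r1}}} ⊕ Z_2^{r2}` with each
`αi ≥ 2`, the map `H ↦ 2H` is a bijection between the set of index-2 subgroups of
`G` of full rank `r1 + r2` and the set of index-2 subgroups of `2G`. -/
theorem stmt5 (r1 r2 : ℕ) (hr : 1 ≤ r1 + r2) (α : Fin r1 → ℕ)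
    (hmono : Antitone α) (hα : ∀ i, 2 ≤ α i) :
    Set.BijOn
      (fun H : AddSubgroup ((∀ i : Fin r1, ZMod (2 ^ α i)) × (Fin r2 → ZMod 2)) =>
        AddSubgroup.map (doubleHom _) H)
      {H | H.index = 2 ∧ HasRank2Group H (r1 + r2)}
      {H' | H' ≤ (doubleHom ((∀ i : Fin r1, ZMod (2 ^ α i)) × (Fin r2 → ZMod 2))).range ∧
        H'.relIndex (doubleHom ((∀ i : Fin r1, ZMod (2 ^ α i)) × (Fin r2 → ZMod 2))).range = 2} :=
  stmt5_general r1 r2 α hα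
end

section
/- Every graph Γ on n vertices has at most 3^{n/3} maximal independent sets. -/
/-- The collection of maximal independent sets of a simple graph. -/
def maxIndepSets {V : Type*} (Γ : SimpleGraph V) : Set (Set V) :=
  {I | (∀ x ∈ I, ∀ y ∈ I, ¬ Γ.Adj x y) ∧
    ∀ J : Set V, (∀ x ∈ J, ∀ y ∈ J, ¬ Γ.Adj x y) → I ⊆ J → I = J}

/-!
Pick a vertex `v` of minimum degree `d`. A maximal independent set dominates the graph, so it
contains a vertex `w` of the closed neighbourhood `N[v]`, and it is then determined by its trace on
the complement of `N[w]`, where it is again maximal independent. That complement has at most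
`n - (d + 1)` vertices, so by induction the count is at most `(d + 1) · 3^((n - d - 1)/3)`,
which is at most `3^(n/3)` because `k ≤ 3^(k/3)`, i.e. `k³ ≤ 3^k`, for every natural number `k`.
-/

namespace SimpleGraph

variable {V : Type*} (Γ : SimpleGraph V)

def closedNeighborSet (v : V) : Set V := insert v (Γ.neighborSet v)

theorem ncard_closedNeighborSet [Finite V] (v : V) :
    (Γ.closedNeighborSet v).ncard = (Γ.neighborSet v).ncard + 1 :=
  Set.ncard_insert_of_notMem (by simp)

theorem card_compl_closedNeighborSet [Finite V] (v : V) :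
    Nat.card ↥(Γ.closedNeighborSet v)ᶜ + (Γ.neighborSet v).ncard + 1 = Nat.card V := by
  rw [Nat.card_coe_set_eq, ← Set.ncard_add_ncard_compl (Γ.closedNeighborSet v),
    ncard_closedNeighborSet]
  ring

end SimpleGraph

section MaxIndepSets

variable {V : Type*} {Γ : SimpleGraph V} {I : Set V}

theorem mem_maxIndepSets_iff :
    I ∈ maxIndepSets Γ ↔
      (∀ x ∈ I, ∀ y ∈ I, ¬ Γ.Adj x y) ∧ ∀ w ∉ I, ∃ y ∈ I, Γ.Adj w y := by
  refine ⟨fun ⟨hind, hmax⟩ => ⟨hind, fun w hw => ?_⟩,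
    fun ⟨hind, hdom⟩ => ⟨hind, fun J hJ hIJ => ?_⟩⟩
  · by_contra! hfree
    refine hw ((hmax (insert w I) ?_ (Set.subset_insert w I)) ▸ Set.mem_insert w I)
    rintro x (rfl | hx) y (rfl | hy)
    · exact Γ.irrefl
    · exact hfree y hy
    · exact fun h => hfree x hx h.symm
    · exact hind x hx y hy
  · refine hIJ.antisymm fun w hwJ => by_contra fun hwI => ?_
    obtain ⟨y, hy, hadj⟩ := hdom w hwI
    exact hJ w hwJ y (hIJ hy) hadj

theorem exists_mem_closedNeighborSet_of_mem_maxIndepSets (hI : I ∈ maxIndepSets Γ) (v : V) :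
    ∃ w ∈ Γ.closedNeighborSet v, w ∈ I := by
  by_cases hv : v ∈ I
  · exact ⟨v, Set.mem_insert v _, hv⟩
  · obtain ⟨y, hy, hadj⟩ := (mem_maxIndepSets_iff.mp hI).2 v hv
    exact ⟨y, Set.mem_insert_of_mem v hadj, hy⟩

theorem preimage_val_mem_maxIndepSets_induce (hI : I ∈ maxIndepSets Γ) {S : Set V}
    (hS : ∀ x ∈ S, ∀ y ∈ I, Γ.Adj x y → y ∈ S) :
    ((↑) : S → V) ⁻¹' I ∈ maxIndepSets (Γ.induce S) := by
  rw [mem_maxIndepSets_iff] at hI ⊢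
  refine ⟨fun x hx y hy => hI.1 x hx y hy, fun w hw => ?_⟩
  obtain ⟨y, hy, hadj⟩ := hI.2 w hw
  exact ⟨⟨y, hS w w.2 y hy hadj⟩, hy, hadj⟩

theorem mem_iff_eq_of_mem_closedNeighborSet (hI : ∀ x ∈ I, ∀ y ∈ I, ¬ Γ.Adj x y) {w x : V}
    (hw : w ∈ I) (hx : x ∈ Γ.closedNeighborSet w) : x ∈ I ↔ x = w := by
  refine ⟨fun hxI => ?_, fun h => h ▸ hw⟩
  rcases hx with rfl | hadj
  · rfl
  · exact absurd hadj (hI w hw x hxI)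

theorem mem_compl_closedNeighborSet_of_adj (hI : ∀ x ∈ I, ∀ y ∈ I, ¬ Γ.Adj x y) {w x y : V}
    (hw : w ∈ I) (hx : x ∈ (Γ.closedNeighborSet w)ᶜ) (hy : y ∈ I) (hxy : Γ.Adj x y) :
    y ∈ (Γ.closedNeighborSet w)ᶜ := by
  intro hyw
  rw [mem_iff_eq_of_mem_closedNeighborSet hI hw hyw] at hy
  subst hy
  exact hx (Or.inr hxy.symm)

theorem ncard_maxIndepSets_mem_le [Finite V] (w : V) :
    {I ∈ maxIndepSets Γ | w ∈ I}.ncard ≤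
      (maxIndepSets (Γ.induce (Γ.closedNeighborSet w)ᶜ)).ncard := by
  refine Set.ncard_le_ncard_of_injOn (((↑) : ↥(Γ.closedNeighborSet w)ᶜ → V) ⁻¹' ·)
    (fun I ⟨hI, hw⟩ => preimage_val_mem_maxIndepSets_induce hI
      fun _ hx _ hy => mem_compl_closedNeighborSet_of_adj hI.1 hw hx hy) ?_
  rintro I ⟨hI, hw⟩ I' ⟨hI', hw'⟩ heq
  ext x
  by_cases hx : x ∈ Γ.closedNeighborSet w
  · rw [mem_iff_eq_of_mem_closedNeighborSet hI.1 hw hx,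
      mem_iff_eq_of_mem_closedNeighborSet hI'.1 hw' hx]
  · exact Set.ext_iff.mp heq ⟨x, hx⟩

theorem ncard_maxIndepSets_le_mul [Finite V] (v : V) {B : ℝ}
    (hB : ∀ w ∈ Γ.closedNeighborSet v, ({I ∈ maxIndepSets Γ | w ∈ I}.ncard : ℝ) ≤ B) :
    ((maxIndepSets Γ).ncard : ℝ) ≤ (Γ.closedNeighborSet v).ncard * B := by
  set N := (Set.toFinite (Γ.closedNeighborSet v)).toFinset
  have hcover : maxIndepSets Γ ⊆ ⋃ w ∈ N, {I ∈ maxIndepSets Γ | w ∈ I} := fun I hI => by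
    obtain ⟨w, hwv, hwI⟩ := exists_mem_closedNeighborSet_of_mem_maxIndepSets hI v
    exact Set.mem_biUnion ((Set.Finite.mem_toFinset _).mpr hwv) ⟨hI, hwI⟩
  calc ((maxIndepSets Γ).ncard : ℝ)
      ≤ ∑ w ∈ N, ({I ∈ maxIndepSets Γ | w ∈ I}.ncard : ℝ) := by
        exact_mod_cast (Set.ncard_le_ncard hcover).trans (Finset.set_ncard_biUnion_le _ _)
    _ ≤ N.card • B :=
        Finset.sum_le_card_nsmul _ _ _ fun w hw => hB w ((Set.Finite.mem_toFinset _).mp hw)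
    _ = (Γ.closedNeighborSet v).ncard * B := by
        rw [nsmul_eq_mul, Set.ncard_eq_toFinset_card _ (Set.toFinite _)]

end MaxIndepSets

theorem pow_three_le_three_pow (k : ℕ) : k ^ 3 ≤ 3 ^ k := by
  induction k with
  | zero => norm_num
  | succ k ih =>
    rcases Nat.lt_or_ge k 3 with hk | hk
    · interval_cases k <;> norm_num
    · calc (k + 1) ^ 3 ≤ 3 * k ^ 3 := by nlinarith [sq_nonneg k]
        _ ≤ 3 ^ (k + 1) := by rw [pow_succ 3 k]; linarith

theorem natCast_le_three_rpow_div_three (k : ℕ) : (k : ℝ) ≤ 3 ^ ((k : ℝ) / 3) := by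
  have hcube : ((3 : ℝ) ^ ((k : ℝ) / 3)) ^ 3 = 3 ^ k := by
    rw [← Real.rpow_natCast, ← Real.rpow_mul (by norm_num)]
    norm_num
  rw [← pow_le_pow_iff_left₀ (Nat.cast_nonneg k) (by positivity) three_ne_zero, hcube]
  exact_mod_cast pow_three_le_three_pow k

theorem natCast_mul_three_rpow_le (m k : ℕ) :
    (k : ℝ) * 3 ^ ((m : ℝ) / 3) ≤ 3 ^ (((m + k : ℕ) : ℝ) / 3) := by
  rw [Nat.cast_add, add_div, Real.rpow_add (by norm_num), mul_comm]
  gcongr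
  exact natCast_le_three_rpow_div_three k

/-- Moon–Moser: every graph on `n` vertices has at most `3^{n/3}`
maximal independent sets. -/
theorem stmt6 (V : Type*) [Finite V] (Γ : SimpleGraph V) :
    ((maxIndepSets Γ).ncard : ℝ) ≤ (3 : ℝ) ^ ((Nat.card V : ℝ) / 3) := by
  induction hn : Nat.card V using Nat.strong_induction_on generalizing V with
  | _ n ih =>
  rcases isEmpty_or_nonempty V with _ | _
  · exact le_trans (by exact_mod_cast Set.ncard_le_one_of_subsingleton _)
      (Real.one_le_rpow (by norm_num) (by positivity))
  obtain ⟨v, hv⟩ := Finite.exists_min fun v => (Γ.neighborSet v).ncard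
  set k := (Γ.closedNeighborSet v).ncard with hk
  have hkn : k ≤ n := hn ▸ Set.ncard_le_card _
  rw [Γ.ncard_closedNeighborSet] at hk
  have hterm : ∀ w ∈ Γ.closedNeighborSet v,
      ({I ∈ maxIndepSets Γ | w ∈ I}.ncard : ℝ) ≤ 3 ^ (((n - k : ℕ) : ℝ) / 3) := by
    intro w _
    have hcard := Γ.card_compl_closedNeighborSet w
    calc _ ≤ ((maxIndepSets (Γ.induce (Γ.closedNeighborSet w)ᶜ)).ncard : ℝ) := by
          exact_mod_cast ncard_maxIndepSets_mem_le w
      _ ≤ 3 ^ ((Nat.card ↥(Γ.closedNeighborSet w)ᶜ : ℝ) / 3) := ih _ (by omega) _ _ rfl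
      _ ≤ _ := by
          gcongr
          · norm_num
          · have := hv w
            omega
  calc ((maxIndepSets Γ).ncard : ℝ) ≤ k * 3 ^ (((n - k : ℕ) : ℝ) / 3) :=
        ncard_maxIndepSets_le_mul v hterm
    _ ≤ 3 ^ ((n : ℝ) / 3) := by
        simpa [Nat.sub_add_cancel hkn] using natCast_mul_three_rpow_le (n - k) k
end

section
/- The graph H consisting of two disjoint triangles joined by a single edge has exactly 8 maximal independent sets; consequently, the disjoint union of n/6 copies of H is an n-vertex graph with a perfect matching having exactly 2^{n/2} maximal independent sets. -/
/-- The graph `H` on 6 vertices consisting of two disjoint triangles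
`{0,1,2}` and `{3,4,5}` joined by the single edge `03`. -/
def twoTriangles : SimpleGraph (Fin 6) :=
  SimpleGraph.fromRel (fun a b =>
    ((a : ℕ), (b : ℕ)) ∈ ({(0,1),(0,2),(1,2),(3,4),(3,5),(4,5),(0,3)} : Set (ℕ × ℕ)))

/-- The disjoint union of `m` copies of `twoTriangles`, realised as the box
product with the empty graph on `Fin m`. -/
def manyCopies (m : ℕ) : SimpleGraph (Fin m × Fin 6) :=
  (⊥ : SimpleGraph (Fin m)) □ twoTriangles

namespace SimpleGraph

variable {V : Type*}

lemma mem_maxIndepSets_iff (G : SimpleGraph V) (I : Set V) :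
    I ∈ maxIndepSets G ↔ ∀ v, v ∈ I ↔ ∀ x ∈ I, ¬ G.Adj x v := by
  constructor
  · rintro ⟨hind, hmax⟩ v
    refine ⟨fun hv x hx => hind x hx v hv, fun hv => ?_⟩
    have hindv : ∀ x ∈ insert v I, ∀ y ∈ insert v I, ¬ G.Adj x y := by
      rintro x (rfl | hx) y (rfl | hy)
      exacts [G.irrefl, fun h => hv y hy h.symm, hv x hx, hind x hx y hy]
    exact hmax _ hindv (Set.subset_insert v I) ▸ Set.mem_insert v I
  · intro h
    refine ⟨fun x hx y hy => (h y).1 hy x hx, fun J hJ hIJ => hIJ.antisymm fun v hv => ?_⟩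
    exact (h v).2 fun x hx => hJ x (hIJ hx) v hv

lemma ncard_maxIndepSets_eq_card_filter [Fintype V] [DecidableEq V]
    (G : SimpleGraph V) [DecidableRel G.Adj] :
    (maxIndepSets G).ncard =
      (Finset.univ.filter fun F : Finset V => ∀ v, v ∈ F ↔ ∀ x ∈ F, ¬ G.Adj x v).card := by
  have hcoe : maxIndepSets G = (fun F : Finset V => (F : Set V)) '' ↑(Finset.univ.filter
      fun F : Finset V => ∀ v, v ∈ F ↔ ∀ x ∈ F, ¬ G.Adj x v) := by
    classical
    ext I
    rw [mem_maxIndepSets_iff]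
    constructor
    · intro h
      exact ⟨I.toFinset, by simpa using h, I.coe_toFinset⟩
    · rintro ⟨F, hF, rfl⟩
      simpa using hF
  rw [hcoe, Set.ncard_image_of_injective _ Finset.coe_injective, Set.ncard_coe_finset]

variable {ι : Type*} (G : SimpleGraph V)

lemma bot_boxProd_adj {p q : ι × V} :
    ((⊥ : SimpleGraph ι) □ G).Adj p q ↔ p.1 = q.1 ∧ G.Adj p.2 q.2 := by
  simp [boxProd_adj, and_comm]

lemma mem_maxIndepSets_bot_boxProd_iff (I : Set (ι × V)) :
    I ∈ maxIndepSets ((⊥ : SimpleGraph ι) □ G) ↔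
      ∀ i, {v | (i, v) ∈ I} ∈ maxIndepSets G := by
  simp only [mem_maxIndepSets_iff, Prod.forall, bot_boxProd_adj, Set.mem_ofPred_eq, not_and]
  exact forall_congr' fun i => forall_congr' fun v =>
    iff_congr Iff.rfl ⟨fun h x hx => h i x hx rfl, fun h j x hx hj => h x (hj ▸ hx)⟩

def maxIndepSetsBotBoxProdEquiv :
    maxIndepSets ((⊥ : SimpleGraph ι) □ G) ≃ (ι → maxIndepSets G) :=
  ((Equiv.curry ι V Prop).subtypeEquiv fun I => mem_maxIndepSets_bot_boxProd_iff G I).trans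
    Equiv.subtypePiEquivPi

lemma ncard_maxIndepSets_bot_boxProd [Finite ι] :
    (maxIndepSets ((⊥ : SimpleGraph ι) □ G)).ncard = (maxIndepSets G).ncard ^ Nat.card ι := by
  rw [← Nat.card_coe_set_eq, Nat.card_congr (maxIndepSetsBotBoxProdEquiv G), Nat.card_fun,
    Nat.card_coe_set_eq]

lemma exists_isPerfectMatching_of_involutive {G : SimpleGraph V} {f : V → V}
    (hf : Function.Involutive f) (hG : ∀ v, G.Adj v (f v)) :
    ∃ M : G.Subgraph, M.IsPerfectMatching := by
  let M : G.Subgraph :=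
    { verts := Set.univ
      Adj v w := f v = w
      adj_sub := by rintro v _ rfl; exact hG v
      edge_vert := fun _ => trivial
      symm := ⟨fun v _ h => h ▸ hf v⟩ }
  exact ⟨M, Subgraph.isPerfectMatching_iff.2 fun v => existsUnique_eq'⟩

end SimpleGraph

open SimpleGraph

instance : DecidableRel twoTriangles.Adj := by
  unfold twoTriangles; infer_instance

-- Each triangle contributes exactly one vertex, and every such pair except `{0, 3}` is maximal.
lemma ncard_maxIndepSets_twoTriangles : (maxIndepSets twoTriangles).ncard = 8 := by
  rw [ncard_maxIndepSets_eq_card_filter]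
  decide

/-- the two-triangles graph `H` has exactly 8 maximal independent
sets; consequently the disjoint union of `n/6 = m` copies of `H` is an `n`-vertex
graph with a perfect matching having exactly `2^{n/2}` maximal independent sets. -/
theorem stmt11 (m : ℕ) :
    (maxIndepSets twoTriangles).ncard = 8 ∧
    (maxIndepSets (manyCopies m)).ncard = 2 ^ ((6 * m) / 2) ∧
    ∃ M : (manyCopies m).Subgraph, M.IsPerfectMatching := by
  refine ⟨ncard_maxIndepSets_twoTriangles, ?_, ?_⟩
  · rw [manyCopies, ncard_maxIndepSets_bot_boxProd, ncard_maxIndepSets_twoTriangles, Nat.card_fin,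
      show 6 * m / 2 = 3 * m by omega, pow_mul]
    norm_num
  · let g : Fin 6 → Fin 6 := ![3, 2, 1, 0, 5, 4]
    have hg : ∀ v, g (g v) = v := by decide
    have hadj : ∀ v, twoTriangles.Adj v (g v) := by decide
    exact exists_isPerfectMatching_of_involutive (f := Prod.map id g)
      (fun p => Prod.ext rfl (hg p.2)) fun p => (bot_boxProd_adj _).2 ⟨rfl, hadj p.2⟩
end

section
/- Let p ≥ 5 be a prime with p ≡ 2 (mod 3) and let G be a finite abelian group of order n divisible by p (type I(p)), with p the smallest such prime. Then G has at least 2^{μ(G)/2} maximal distinct sum-free subsets, where μ(G) = n(p+1)/(3p). -/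
/-!
Pull the middle third `{k + 1, …, 2k + 1}` of `ZMod (3k + 2)` back along a surjection
`G → ZMod p`: this is a sum-free set `B = -B` of size `μ(G)` without elements of order two.
Split it as `B = R ∪ -R` with `R ∩ -R = ∅`. For every `T ⊆ R` the set `{0} ∪ T ∪ -(R \ T)` is
distinct sum-free, and two different `T` cannot lie in a common distinct sum-free set, which would
contain a distinct Schur triple `0, x, -x`. Hence there are at least `2 ^ |R| = 2 ^ (μ(G) / 2)`
maximal ones.
-/

/-- `S` is distinct sum-free: it contains no triple of pairwise-distinct elements
`x, y, z` with `x + y = z`. -/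
def IsDistSumFree {G : Type*} [AddCommGroup G] (S : Set G) : Prop :=
  ∀ x ∈ S, ∀ y ∈ S, ∀ z ∈ S, x ≠ y → x ≠ z → y ≠ z → x + y ≠ z

/-- `S` is a maximal distinct sum-free subset of `G`. -/
def IsMaxDistSumFree {G : Type*} [AddCommGroup G] (S : Set G) : Prop :=
  IsDistSumFree S ∧ ∀ T : Set G, IsDistSumFree T → S ⊆ T → S = T

open Function Set Pointwise

section DistSumFree

variable {G : Type*} [AddCommGroup G]

lemma IsDistSumFree.mono {S T : Set G} (hT : IsDistSumFree T) (h : S ⊆ T) : IsDistSumFree S :=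
  fun x hx y hy z hz => hT x (h hx) y (h hy) z (h hz)

lemma isMaxDistSumFree_iff_maximal {S : Set G} : IsMaxDistSumFree S ↔ Maximal IsDistSumFree S :=
  ⟨fun ⟨hS, hmax⟩ => ⟨hS, fun T hT h => (hmax T hT h).ge⟩,
    fun ⟨hS, hmax⟩ => ⟨hS, fun _ hT h => h.antisymm (hmax hT h)⟩⟩

lemma IsDistSumFree.neg_notMem {S : Set G} (hS : IsDistSumFree S) (h0 : (0 : G) ∈ S)
    {x : G} (hx : x ∈ S) (hxn : -x ≠ x) : -x ∉ S := fun hnx =>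
  have hx0 : x ≠ 0 := by rintro rfl; simp at hxn
  hS x hx (-x) hnx 0 h0 hxn.symm hx0 (neg_ne_zero.mpr hx0) (add_neg_cancel x)

lemma IsDistSumFree.insert_zero {C : Set G} (hC : IsDistSumFree C) (hdisj : Disjoint C (-C)) :
    IsDistSumFree (insert 0 C) := by
  intro x hx y hy z hz hxy hxz hyz hsum
  rcases hx with rfl | hx
  · exact hyz (by simpa using hsum)
  rcases hy with rfl | hy
  · exact hxz (by simpa using hsum)
  rcases hz with rfl | hz
  · exact disjoint_left.mp hdisj hx (by rwa [mem_neg, neg_eq_of_add_eq_zero_right hsum])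
  · exact hC x hx y hy z hz hxy hxz hyz hsum

lemma disjoint_union_neg_diff {R T : Set G} (hR : Disjoint R (-R)) (hT : T ⊆ R) :
    Disjoint (T ∪ -(R \ T)) (-(T ∪ -(R \ T))) := by
  rw [union_neg, neg_neg, disjoint_left]
  rintro x (hx | hx) (hx' | hx')
  · exact disjoint_left.mp hR (hT hx) (neg_subset_neg.mpr hT hx')
  · exact hx'.2 hx
  · exact hx.2 hx'
  · exact disjoint_left.mp hR hx'.1 (neg_subset_neg.mpr sdiff_subset hx)

theorem two_pow_ncard_le_card_isMaxDistSumFree [Finite G] {R : Set G} (hR : Disjoint R (-R))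
    (hRR : IsDistSumFree (R ∪ -R)) :
    2 ^ R.ncard ≤ Nat.card {S : Set G // IsMaxDistSumFree S} := by
  have hfree (T : 𝒫 R) : IsDistSumFree (insert 0 (T.1 ∪ -(R \ T.1))) :=
    (hRR.mono (union_subset_union T.2 (neg_subset_neg.mpr sdiff_subset))).insert_zero
      (disjoint_union_neg_diff hR T.2)
  choose M hM using fun T : 𝒫 R => Finite.exists_le_maximal (hfree T)
  have hsep (T₁ T₂ : 𝒫 R) (h : M T₁ = M T₂) : T₁.1 ⊆ T₂.1 := by
    intro x hx₁
    by_contra hx₂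
    have hxR : x ∈ R := T₁.2 hx₁
    have hx : x ∈ M T₂ := h ▸ (hM T₁).1 (by simp [hx₁])
    refine (hM T₂).2.1.neg_notMem ((hM T₂).1 (mem_insert 0 _)) hx
      (fun hxn => disjoint_left.mp hR hxR (by rwa [mem_neg, hxn])) ((hM T₂).1 ?_)
    simp [hxR, hx₂]
  have hinj : Injective fun T : 𝒫 R =>
      (⟨M T, isMaxDistSumFree_iff_maximal.mpr (hM T).2⟩ : {S : Set G // IsMaxDistSumFree S}) :=
    fun T₁ T₂ h => Subtype.ext ((hsep T₁ T₂ (congrArg Subtype.val h)).antisymm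
      (hsep T₂ T₁ (congrArg Subtype.val h).symm))
  calc 2 ^ R.ncard = Nat.card (𝒫 R) := by rw [Nat.card_coe_set_eq, ncard_powerset]
    _ ≤ _ := Nat.card_le_card_of_injective _ hinj

end DistSumFree

theorem exists_disjoint_neg_union_neg_eq {α : Type*} [InvolutiveNeg α] {B : Set α}
    (hB : -B = B) (hfix : ∀ x ∈ B, -x ≠ x) : ∃ R : Set α, Disjoint R (-R) ∧ R ∪ -R = B := by
  let r := @WellOrderingRel α
  refine ⟨{x ∈ B | r x (-x)}, disjoint_left.mpr fun x hx hx' => ?_, subset_antisymm ?_ ?_⟩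
  · exact asymm hx.2 (by simpa using hx'.2)
  · rintro x (hx | hx)
    · exact hx.1
    · exact hB ▸ mem_neg.mpr hx.1
  · intro x hx
    rcases trichotomous_of r x (-x) with h | h | h
    · exact Or.inl ⟨hx, h⟩
    · exact absurd h.symm (hfix x hx)
    · exact Or.inr ⟨mem_neg.mp (hB.symm ▸ hx), by simpa using h⟩

lemma AddMonoidHom.natCard_preimage_of_surjective {G H : Type*} [AddGroup G] [AddGroup H]
    (φ : G →+ H) (hφ : Surjective φ) (t : Set H) :
    Nat.card (φ ⁻¹' t) = Nat.card φ.ker * Nat.card t := by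
  let e := QuotientAddGroup.quotientKerEquivOfSurjective φ hφ
  have : φ ⁻¹' t = QuotientAddGroup.mk ⁻¹' (e ⁻¹' t) := rfl
  rw [this, Nat.card_congr (QuotientAddGroup.preimageMkEquivAddSubgroupProdSet _ _),
    Nat.card_prod, Nat.card_preimage_of_injective e.injective (by simp [e.surjective.range_eq])]

theorem exists_surjective_addMonoidHom_zmod {G : Type*} [AddCommGroup G] [Finite G] {p : ℕ}
    [Fact p.Prime] (hdvd : p ∣ Nat.card G) : ∃ φ : G →+ ZMod p, Surjective φ := by
  let H := (nsmulAddMonoidHom p : G →+ G).range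
  -- `have`, not `let`: unfolding `zmodModule` (a `match` on `p`) blocks instance search below
  have : Module (ZMod p) (G ⧸ H) := QuotientAddGroup.zmodModule fun x => ⟨x, rfl⟩
  obtain ⟨x, hx⟩ : ∃ x : G, x ∉ H := by
    by_contra! hH
    obtain ⟨g, hg⟩ := exists_prime_addOrderOf_dvd_card' p hdvd
    have hinj : Injective (nsmulAddMonoidHom p : G →+ G) :=
      Finite.injective_iff_surjective.mpr hH
    have : g = 0 := hinj (by simp [← hg, addOrderOf_nsmul_eq_zero])
    simp only [this, addOrderOf_zero] at hg
    exact (Fact.out : p.Prime).one_lt.ne hg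
  obtain ⟨f, hf⟩ := Module.Projective.exists_dual_eq_one (ZMod p)
    (mt (QuotientAddGroup.eq_zero_iff x).mp hx)
  refine ⟨f.toAddMonoidHom.comp (QuotientAddGroup.mk' H), fun c => ⟨c.val • x, ?_⟩⟩
  simp [hf]

def middleThird (k : ℕ) : Set (ZMod (3 * k + 2)) := {x | k + 1 ≤ x.val ∧ x.val ≤ 2 * k + 1}

section MiddleThird

variable {k : ℕ}

lemma add_notMem_middleThird {x y : ZMod (3 * k + 2)} (hx : x ∈ middleThird k)
    (hy : y ∈ middleThird k) : x + y ∉ middleThird k := by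
  obtain ⟨hx₁, hx₂⟩ := hx
  obtain ⟨hy₁, hy₂⟩ := hy
  rintro ⟨h₁, h₂⟩
  rw [ZMod.val_add] at h₁ h₂
  by_cases hlt : x.val + y.val < 3 * k + 2
  · rw [Nat.mod_eq_of_lt hlt] at h₁ h₂
    omega
  · rw [Nat.mod_eq_sub_mod (by omega), Nat.mod_eq_of_lt (by omega)] at h₁ h₂
    omega

lemma neg_mem_middleThird {x : ZMod (3 * k + 2)} (hx : x ∈ middleThird k) :
    -x ∈ middleThird k := by
  have hx0 : x ≠ 0 := by rintro rfl; simp [middleThird] at hx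
  obtain ⟨hx₁, hx₂⟩ := hx
  constructor <;> rw [ZMod.neg_val, if_neg hx0] <;> omega

lemma neg_middleThird : -middleThird k = middleThird k :=
  subset_antisymm (fun x hx => neg_neg x ▸ neg_mem_middleThird hx) fun _ => neg_mem_middleThird

lemma neg_ne_self_of_mem_middleThird (hk : Odd k) {x : ZMod (3 * k + 2)}
    (hx : x ∈ middleThird k) : -x ≠ x := by
  have hx0 : x ≠ 0 := by rintro rfl; simp [middleThird] at hx
  obtain ⟨hx₁, hx₂⟩ := hx
  obtain ⟨j, rfl⟩ := hk
  intro h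
  have := congrArg ZMod.val h
  rw [ZMod.neg_val, if_neg hx0] at this
  omega

lemma ncard_middleThird : (middleThird k).ncard = k + 1 := by
  have himage : ZMod.val '' middleThird k = Icc (k + 1) (2 * k + 1) := by
    ext n
    refine ⟨fun ⟨x, hx, hxn⟩ => hxn ▸ hx, fun hn => ⟨n, ?_⟩⟩
    have hval : (n : ZMod (3 * k + 2)).val = n := ZMod.val_natCast_of_lt (hn.2.trans_lt (by omega))
    exact ⟨by simpa [middleThird, hval] using hn, hval⟩
  rw [← ncard_image_of_injective _ (ZMod.val_injective _), himage, ncard_Icc_nat]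
  omega

end MiddleThird

theorem exists_large_symmetric_isDistSumFree {G : Type*} [AddCommGroup G] [Finite G] {k : ℕ}
    [Fact (3 * k + 2).Prime] (hk : Odd k) (hdvd : 3 * k + 2 ∣ Nat.card G) :
    ∃ B : Set G, IsDistSumFree B ∧ -B = B ∧ (∀ x ∈ B, -x ≠ x) ∧
      (3 * k + 2) * B.ncard = (k + 1) * Nat.card G := by
  obtain ⟨φ, hφ⟩ := exists_surjective_addMonoidHom_zmod hdvd
  refine ⟨φ ⁻¹' middleThird k, fun x hx y hy z hz _ _ _ hsum => ?_, ?_, ?_, ?_⟩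
  · exact add_notMem_middleThird hx hy (by rwa [← map_add, hsum])
  · ext x
    change φ (-x) ∈ middleThird k ↔ φ x ∈ middleThird k
    rw [map_neg, ← mem_neg, neg_middleThird]
  · exact fun x hx h => neg_ne_self_of_mem_middleThird hk hx (by rw [← map_neg, h])
  · have hG := φ.natCard_preimage_of_surjective hφ univ
    rw [preimage_univ, Nat.card_univ, Nat.card_univ, Nat.card_zmod] at hG
    rw [← Nat.card_coe_set_eq, φ.natCard_preimage_of_surjective hφ, Nat.card_coe_set_eq,
      ncard_middleThird, hG]
    ring

theorem stmt13_general (G : Type*) [AddCommGroup G] [Fintype G] (p : ℕ) (hp : p.Prime)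
    (hp5 : 5 ≤ p) (hp3 : p % 3 = 2) (hdvd : p ∣ Fintype.card G) :
    (2 : ℝ) ^ (((Fintype.card G : ℝ) * (p + 1) / (3 * p)) / 2) ≤
      Nat.card {S : Set G // IsMaxDistSumFree S} := by
  obtain ⟨k, rfl⟩ : ∃ k, p = 3 * k + 2 := ⟨p / 3, by omega⟩
  have : Fact (3 * k + 2).Prime := ⟨hp⟩
  have hk : Odd k := by
    have := hp.odd_of_ne_two (by omega)
    rw [Nat.odd_iff] at this ⊢
    omega
  rw [← Nat.card_eq_fintype_card] at hdvd ⊢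
  obtain ⟨B, hB, hBneg, hBfix, hBcard⟩ := exists_large_symmetric_isDistSumFree hk hdvd
  obtain ⟨R, hR, rfl⟩ := exists_disjoint_neg_union_neg_eq hBneg hBfix
  have hRcard : 2 * (3 * k + 2) * R.ncard = (k + 1) * Nat.card G := by
    rw [← hBcard, ncard_union_eq hR, ncard_neg]
    ring
  have hexp : (Nat.card G : ℝ) * ((3 * k + 2 : ℕ) + 1) / (3 * (3 * k + 2 : ℕ)) / 2 = R.ncard := by
    have h := congrArg (Nat.cast : ℕ → ℝ) hRcard
    push_cast at h ⊢
    field_simp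
    linear_combination -3 * h
  rw [hexp, Real.rpow_natCast]
  exact_mod_cast two_pow_ncard_le_card_isMaxDistSumFree hR hB

/-- if `G` is a finite abelian group of order `n` of type I(p)
(`p ≥ 5` prime, `p ≡ 2 (mod 3)`, `p ∣ n`, and `p` the smallest such prime), then
`G` has at least `2^{μ(G)/2}` maximal distinct sum-free subsets, where
`μ(G) = n(p+1)/(3p)`. -/
theorem stmt13 (G : Type*) [AddCommGroup G] [Fintype G] (p : ℕ) (hp : p.Prime)
    (hp5 : 5 ≤ p) (hp3 : p % 3 = 2) (hdvd : p ∣ Fintype.card G)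
    (hmin : ∀ q : ℕ, q.Prime → q % 3 = 2 → q ∣ Fintype.card G → p ≤ q) :
    (2 : ℝ) ^ (((Fintype.card G : ℝ) * (p + 1) / (3 * p)) / 2) ≤
      Nat.card {S : Set G // IsMaxDistSumFree S} :=
  stmt13_general G p hp hp5 hp3 hdvd
end

section
/- Let p ≥ 5 be prime, H ≤ G a subgroup of index p of a finite abelian group G, and g ∈ G with g + H a generator of G/H. Then the set B = ∪_{k=0}^{(p−2)/3} ((3k+1)·g + H) is sum-free in G, satisfies B = −B, and has size |G|(p+1)/(3p), provided p ≡ 2 (mod 3). -/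
private lemma arith14 (p m a b : ℕ) (hpm : p = 3 * m + 2)
    (h : a ≡ b [MOD p]) (ha : a % 3 = 2) (hb : b % 3 = 1)
    (ha' : a < 2 * p) (hb' : b < p) : False := by
  rcases le_or_gt b a with h1 | h1
  · obtain ⟨c, hc⟩ := (Nat.modEq_iff_dvd' h1).mp h.symm
    have hc2 : c < 2 := by
      by_contra hc2
      push_neg at hc2
      have : p * 2 ≤ p * c := Nat.mul_le_mul_left p hc2
      omega
    interval_cases c <;> omega
  · obtain ⟨c, hc⟩ := (Nat.modEq_iff_dvd' h1.le).mp h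
    have hc2 : c < 1 := by
      by_contra hc2
      push_neg at hc2
      have : p * 1 ≤ p * c := Nat.mul_le_mul_left p hc2
      omega
    interval_cases c <;> omega

/-- let `p ≥ 5` be a prime with `p ≡ 2 (mod 3)`, `H ≤ G` a subgroup
of index `p` of a finite abelian group `G`, and `g ∈ G` with `g + H` a generator
of `G/H`. Then `B = ∪_{k=0}^{(p-2)/3} ((3k+1)·g + H)` is sum-free, satisfies
`B = -B`, and has size `|G|(p+1)/(3p)`. -/
theorem stmt14 (G : Type*) [AddCommGroup G] [Fintype G] (p : ℕ) (hp : p.Prime)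
    (hp5 : 5 ≤ p) (hp3 : p % 3 = 2) (H : AddSubgroup G) (hH : H.index = p)
    (g : G) (hg : AddSubgroup.zmultiples ((g : G ⧸ H)) = ⊤) :
    (∀ x ∈ {x : G | ∃ k : ℕ, k ≤ (p - 2) / 3 ∧ x - (3 * k + 1) • g ∈ H},
      ∀ y ∈ {x : G | ∃ k : ℕ, k ≤ (p - 2) / 3 ∧ x - (3 * k + 1) • g ∈ H},
        x + y ∉ {x : G | ∃ k : ℕ, k ≤ (p - 2) / 3 ∧ x - (3 * k + 1) • g ∈ H}) ∧
    {x : G | ∃ k : ℕ, k ≤ (p - 2) / 3 ∧ x - (3 * k + 1) • g ∈ H} =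
      -{x : G | ∃ k : ℕ, k ≤ (p - 2) / 3 ∧ x - (3 * k + 1) • g ∈ H} ∧
    {x : G | ∃ k : ℕ, k ≤ (p - 2) / 3 ∧ x - (3 * k + 1) • g ∈ H}.ncard =
      Fintype.card G * (p + 1) / (3 * p) := by
  classical
  set m := (p - 2) / 3 with hm
  have hpm : p = 3 * m + 2 := by omega
  set B := {x : G | ∃ k : ℕ, k ≤ m ∧ x - (3 * k + 1) • g ∈ H} with hB
  set q : G ⧸ H := (g : G ⧸ H) with hqdef
  have hQcard : Nat.card (G ⧸ H) = p := hH
  have hq : addOrderOf q = p := by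
    rw [← Nat.card_zmultiples q, hg, AddSubgroup.card_top]
    exact hQcard
  have hmem : ∀ x : G, x ∈ B ↔ ∃ k : ℕ, k ≤ m ∧ (x : G ⧸ H) = (3 * k + 1) • q := by
    intro x
    simp only [hB, Set.mem_setOf_eq]
    refine exists_congr fun k => and_congr_right fun _ => ?_
    rw [← QuotientAddGroup.eq_zero_iff, QuotientAddGroup.mk_sub,
      QuotientAddGroup.mk_nsmul, sub_eq_zero]
  have hsmul : ∀ a b : ℕ, a • q = b • q ↔ a ≡ b [MOD p] := by
    intro a b
    rw [nsmul_eq_nsmul_iff_modEq, hq]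
  have hpq : p • q = 0 := by rw [← hq]; exact addOrderOf_nsmul_eq_zero q
  have hneg : ∀ k : ℕ, k ≤ m → -((3 * k + 1) • q) = (3 * (m - k) + 1) • q := by
    intro k hk
    have hadd : (3 * k + 1) • q + (3 * (m - k) + 1) • q = 0 := by
      rw [← add_nsmul]
      have h2 : 3 * k + 1 + (3 * (m - k) + 1) = p := by omega
      rw [h2, hpq]
    exact neg_eq_of_add_eq_zero_right hadd
  refine ⟨?_, ?_, ?_⟩
  · intro x hx y hy hxy
    rw [hmem] at hx hy hxy
    obtain ⟨j, hj, hxq⟩ := hx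
    obtain ⟨k, hk, hyq⟩ := hy
    obtain ⟨l, hl, hlq⟩ := hxy
    have hsum : (3 * j + 1 + (3 * k + 1)) • q = (3 * l + 1) • q := by
      rw [add_nsmul, ← hxq, ← hyq, ← QuotientAddGroup.mk_add]
      exact hlq
    have hmod := (hsmul _ _).mp hsum
    exact arith14 p m _ _ hpm hmod (by omega) (by omega) (by omega) (by omega)
  · ext x
    rw [Set.mem_neg, hmem, hmem]
    constructor
    · rintro ⟨k, hk, hx⟩
      refine ⟨m - k, by omega, ?_⟩
      rw [QuotientAddGroup.mk_neg, hx, hneg k hk]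
    · rintro ⟨k, hk, hx⟩
      rw [QuotientAddGroup.mk_neg] at hx
      refine ⟨m - k, by omega, ?_⟩
      rw [← neg_neg (x : G ⧸ H), hx, hneg k hk]
  · set S : Set (G ⧸ H) := (fun k : ℕ => (3 * k + 1) • q) '' Set.Iic m with hS
    have hBS : B = (QuotientAddGroup.mk : G → G ⧸ H) ⁻¹' S := by
      ext x
      rw [hmem]
      simp only [hS, Set.mem_preimage, Set.mem_image, Set.mem_Iic]
      constructor
      · rintro ⟨k, hk, hx⟩; exact ⟨k, hk, hx.symm⟩
      · rintro ⟨k, hk, hx⟩; exact ⟨k, hk, hx.symm⟩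
    have hScard : Nat.card S = m + 1 := by
      have hinj : Set.InjOn (fun k : ℕ => (3 * k + 1) • q) (Set.Iic m) := by
        intro a ha b hb hab
        simp only [Set.mem_Iic] at ha hb
        have h1 := (hsmul _ _).mp hab
        have h2 := h1.eq_of_lt_of_lt (by omega) (by omega)
        omega
      rw [Nat.card_coe_set_eq, hS, Set.ncard_image_of_injOn hinj,
        ← Finset.coe_Iic, Set.ncard_coe_finset, Nat.card_Iic]
    have hcard : B.ncard = Nat.card H * (m + 1) := by
      rw [← Nat.card_coe_set_eq, hBS,
        Nat.card_congr (QuotientAddGroup.preimageMkEquivAddSubgroupProdSet H S),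
        Nat.card_prod, hScard]
    have hG : p * Nat.card H = Fintype.card G := by
      rw [← Nat.card_eq_fintype_card, ← AddSubgroup.index_mul_card (H := H), hH]
    rw [hcard]
    have hfin : Fintype.card G * (p + 1) = 3 * p * (Nat.card H * (m + 1)) := by
      have h1 : p + 1 = 3 * (m + 1) := by omega
      calc Fintype.card G * (p + 1) = p * Nat.card H * (3 * (m + 1)) := by rw [hG, h1]
        _ = 3 * p * (Nat.card H * (m + 1)) := by ring
    rw [hfin, Nat.mul_div_cancel_left _ (by omega : 0 < 3 * p)]
end

section
/- Every finite abelian group G of even order n has at least 2^{(n−2)/4} maximal distinct sum-free subsets. -/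
/-!
Let `φ : G → ℤ/2` be onto (it exists because `|G|` is even), `A = φ⁻¹(1)`, and `D ≤ ker φ` a
subgroup with at most two elements, of order two unless `ker φ` has no involution. Call
`a, b ∈ A` linked when `a - b ∈ D` or `a + b ∈ D`. The classes have at most four elements, and at
most one of them is a singleton: `{a}` forces `D = 0` and `2a = 0`, and for a second singleton
`{a'}`, `a - a'` would be an involution of `ker φ`.

Since `A + A ⊆ ker φ`, a distinct Schur triple in `D ∪ t`, for a transversal `t` of the classes,
would have to use two linked elements of `A`. So `D ∪ t` is distinct sum-free and, for the same
reason, two different transversals never lie in one distinct sum-free set containing `D`.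
Extending each `D ∪ t` to a maximal set gives `∏ |class|` maximal sets, and `2^m ≤ m²` for
`2 ≤ m ≤ 4` turns this into `(∏ |class|)² ≥ 2^(|A| - 1) = 2^((n - 2)/2)`.
-/

theorem two_pow_sum_le_two_mul_prod_sq {ι : Type*} [Fintype ι] (m : ι → ℕ) (hm1 : ∀ i, 1 ≤ m i)
    (hm4 : ∀ i, m i ≤ 4) (hunique : ∀ i j, m i = 1 → m j = 1 → i = j) :
    2 ^ ∑ i, m i ≤ 2 * (∏ i, m i) ^ 2 := by
  classical
  have key : ∀ i, m i ≠ 1 → 2 ^ m i ≤ m i ^ 2 := fun i hi => by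
    have := hm1 i; have := hm4 i
    interval_cases m i <;> omega
  by_cases h : ∃ i₀, m i₀ = 1
  · obtain ⟨i₀, hi₀⟩ := h
    rw [← Finset.add_sum_erase _ _ (Finset.mem_univ i₀),
      ← Finset.mul_prod_erase _ _ (Finset.mem_univ i₀), hi₀, pow_add, one_mul, pow_one,
      ← Finset.prod_pow, ← Finset.prod_pow_eq_pow_sum]
    exact Nat.mul_le_mul_left 2 <| Finset.prod_le_prod' fun i hi =>
      key i fun h => Finset.ne_of_mem_erase hi (hunique _ _ h hi₀)
  · simp only [not_exists] at h
    calc 2 ^ ∑ i, m i = ∏ i, 2 ^ m i := (Finset.prod_pow_eq_pow_sum _ _ _).symm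
      _ ≤ ∏ i, m i ^ 2 := Finset.prod_le_prod' fun i _ => key i (h i)
      _ ≤ 2 * (∏ i, m i) ^ 2 := by rw [Finset.prod_pow]; omega

section

variable {G : Type*} [AddCommGroup G]

theorem exists_isMaxDistSumFree_superset [Finite G] {S : Set G} (hS : IsDistSumFree S) :
    ∃ T, S ⊆ T ∧ IsMaxDistSumFree T := by
  obtain ⟨T, ⟨hT, hST⟩, hmax⟩ :=
    (Set.toFinite {T : Set G | IsDistSumFree T ∧ S ⊆ T}).exists_maximal ⟨S, hS, subset_rfl⟩
  exact ⟨T, hST, hT, fun U hU hTU => hTU.antisymm (hmax ⟨hU, hST.trans hTU⟩ hTU)⟩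

theorem exists_addMonoidHom_zmod_two_eq_one [Finite G] (heven : Even (Nat.card G)) :
    ∃ (φ : G →+ ZMod 2) (a : G), φ a = 1 := by
  obtain ⟨t, ht⟩ := exists_prime_addOrderOf_dvd_card' 2 heven.two_dvd
  let double : G →+ G := nsmulAddMonoidHom 2
  have hdouble : ¬ Function.Surjective double := by
    rw [← Finite.injective_iff_surjective]
    intro hinj
    have : t = 0 := hinj (by simp [double, ← ht, addOrderOf_nsmul_eq_zero])
    simp [this] at ht
  obtain ⟨a, ha⟩ : ∃ a, a ∉ double.range := by simpa [Function.Surjective] using hdouble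
  let : Module (ZMod 2) (G ⧸ double.range) :=
    QuotientAddGroup.zmodModule fun x => ⟨x, rfl⟩
  obtain ⟨f, hf⟩ := Module.Projective.exists_dual_ne_zero (ZMod 2)
    (mt (QuotientAddGroup.eq_zero_iff a).mp ha)
  have hZMod2 : ∀ b : ZMod 2, b ≠ 0 → b = 1 := by decide
  exact ⟨f.toAddMonoidHom.comp (QuotientAddGroup.mk' _), a, hZMod2 _ hf⟩

theorem card_eq_two_mul_card_preimage_one [Finite G] (φ : G →+ ZMod 2) {a : G} (ha : φ a = 1) :
    Nat.card G = 2 * Nat.card {x // φ x = 1} := by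
  classical
  have e : {x // ¬ φ x = 1} ≃ {x // φ x = 1} :=
    (Equiv.addRight a).subtypeEquiv fun x => by
      rw [Equiv.coe_addRight, map_add, ha]
      generalize φ x = b
      revert b; decide
  rw [← Nat.card_congr (Equiv.sumCompl fun x => φ x = 1), Nat.card_sum, Nat.card_congr e, two_mul]

theorem exists_addSubgroup_le_ker_card_le_two (φ : G →+ ZMod 2) :
    ∃ D : AddSubgroup G, D ≤ φ.ker ∧ Nat.card D ≤ 2 ∧
      (D = ⊥ → ∀ t, φ t = 0 → t + t = 0 → t = 0) := by
  by_cases h : ∃ s, φ s = 0 ∧ s + s = 0 ∧ s ≠ 0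
  · obtain ⟨s, hφs, hs, hs0⟩ := h
    refine ⟨AddSubgroup.zmultiples s, AddSubgroup.zmultiples_le_of_mem hφs, ?_, fun hbot => ?_⟩
    · rw [Nat.card_zmultiples]
      exact addOrderOf_le_of_nsmul_eq_zero two_pos (by rwa [two_nsmul])
    · exact absurd (AddSubgroup.zmultiples_eq_bot.mp hbot) hs0
  · simp only [not_exists, not_and, not_not] at h
    exact ⟨⊥, bot_le, by simp, fun _ t hφt ht => h t hφt ht⟩

def AddSubgroup.signedCosetSetoid (D : AddSubgroup G) : Setoid G where
  r x y := x - y ∈ D ∨ x + y ∈ D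
  iseqv.refl x := Or.inl (by simp [D.zero_mem])
  iseqv.symm {x y} h := h.imp (fun h => by simpa using D.neg_mem h) fun h => by rwa [add_comm]
  iseqv.trans {x y z} := by
    rintro (hxy | hxy) (hyz | hyz)
    · exact Or.inl (by simpa using D.add_mem hxy hyz)
    · exact Or.inr (by convert D.add_mem hxy hyz using 1; abel)
    · exact Or.inr (by convert D.sub_mem hxy hyz using 1; abel)
    · exact Or.inl (by convert D.sub_mem hxy hyz using 1; abel)

theorem AddSubgroup.ncard_setOf_signedCoset_le [Finite G] (D : AddSubgroup G) (a : G) :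
    {b | a - b ∈ D ∨ a + b ∈ D}.ncard ≤ 2 * Nat.card D := by
  have : {b | a - b ∈ D ∨ a + b ∈ D} = (a - ·) '' D ∪ (· - a) '' D := by
    ext b
    simp only [Set.mem_ofPred_eq, Set.mem_union, Set.mem_image, SetLike.mem_coe]
    refine or_congr ⟨fun h => ⟨_, h, sub_sub_cancel a b⟩, ?_⟩
      ⟨fun h => ⟨_, h, add_sub_cancel_left a b⟩, ?_⟩
    · rintro ⟨d, hd, rfl⟩; simpa using hd
    · rintro ⟨d, hd, rfl⟩; simpa using hd
  have hD : (D : Set G).ncard = Nat.card D := (Nat.card_coe_set_eq _).symm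
  rw [this, two_mul, ← hD]
  exact (Set.ncard_union_le _ _).trans (add_le_add (Set.ncard_image_le (Set.toFinite _))
    (Set.ncard_image_le (Set.toFinite _)))

/-- For `D = {0, s}`, the classes are the connected components (in fact cliques) of the distinct
link graph of `D` on `φ⁻¹(1)`. -/
def linkSetoid (φ : G →+ ZMod 2) (D : AddSubgroup G) : Setoid {x // φ x = 1} :=
  D.signedCosetSetoid.comap Subtype.val

variable {φ : G →+ ZMod 2} {D : AddSubgroup G}

theorem ne_of_map_eq_one_of_mem (hDφ : D ≤ φ.ker) {a d : G} (ha : φ a = 1) (hd : d ∈ D) :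
    a ≠ d := by
  rintro rfl
  exact zero_ne_one ((hDφ hd).symm.trans ha)

theorem eq_of_mem_isDistSumFree (hDφ : D ≤ φ.ker) {T : Set G} (hT : IsDistSumFree T)
    (hDT : (D : Set G) ⊆ T) {a b : G} (ha : a ∈ T) (hb : b ∈ T) (ha1 : φ a = 1) (hb1 : φ b = 1)
    (hab : a - b ∈ D ∨ a + b ∈ D) : a = b := by
  by_contra hne
  rcases hab with hab | hab
  · exact hT b hb (a - b) (hDT hab) a ha (ne_of_map_eq_one_of_mem hDφ hb1 hab) (Ne.symm hne)
      (ne_of_map_eq_one_of_mem hDφ ha1 hab).symm (add_sub_cancel b a)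
  · exact hT a ha b hb (a + b) (hDT hab) hne (ne_of_map_eq_one_of_mem hDφ ha1 hab)
      (ne_of_map_eq_one_of_mem hDφ hb1 hab) rfl

theorem isDistSumFree_union [Finite G] (hDφ : D ≤ φ.ker) (hD2 : Nat.card D ≤ 2) {S : Set G}
    (hS1 : ∀ a ∈ S, φ a = 1) (hSrel : ∀ a ∈ S, ∀ b ∈ S, a - b ∈ D ∨ a + b ∈ D → a = b) :
    IsDistSumFree ((D : Set G) ∪ S) := by
  intro x hx y hy z hz hxy hxz hyz hsum
  have hφ : φ x + φ y = φ z := by rw [← map_add, hsum]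
  have hD0 : ∀ d ∈ D, φ d = 0 := fun d hd => hDφ hd
  rcases hx with hx | hx <;> rcases hy with hy | hy <;> rcases hz with hz | hz
  · have : 2 < (D : Set G).ncard :=
      (Set.two_lt_ncard_iff).mpr ⟨x, y, z, hx, hy, hz, hxy, hxz, hyz⟩
    rw [← Nat.card_coe_set_eq] at this
    exact absurd hD2 (not_le.mpr this)
  · simp [hD0 x hx, hD0 y hy, hS1 z hz] at hφ
  · simp [hD0 x hx, hS1 y hy, hD0 z hz] at hφ
  · exact hyz (hSrel z hz y hy (Or.inl (by rwa [← hsum, add_sub_cancel_right]))).symm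
  · simp [hS1 x hx, hD0 y hy, hD0 z hz] at hφ
  · exact hxz (hSrel z hz x hx (Or.inl (by rwa [← hsum, add_sub_cancel_left]))).symm
  · exact hxy (hSrel x hx y hy (Or.inr (hsum ▸ hz)))
  · simp [hS1 x hx, hS1 y hy, hS1 z hz] at hφ

theorem card_fiber_linkSetoid_le [Finite G] (q : Quotient (linkSetoid φ D)) :
    Nat.card {a // Quotient.mk _ a = q} ≤ 2 * Nat.card D := by
  obtain ⟨a, rfl⟩ := Quotient.exists_rep q
  let f (b : {b // Quotient.mk _ b = Quotient.mk (linkSetoid φ D) a}) :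
      {b | (a : G) - b ∈ D ∨ (a : G) + b ∈ D} :=
    ⟨b.1, Quotient.exact b.2.symm⟩
  have hf : Function.Injective f := fun b c h => by
    have : (f b : G) = f c := congrArg Subtype.val h
    exact Subtype.ext (Subtype.ext this)
  exact (Nat.card_le_card_of_injective f hf).trans
    ((Nat.card_coe_set_eq _).trans_le (D.ncard_setOf_signedCoset_le a))

theorem eq_bot_and_add_self_eq_zero_of_card_fiber_eq_one (hDφ : D ≤ φ.ker)
    {a : {x // φ x = 1}}
    (h : Nat.card {b // Quotient.mk _ b = Quotient.mk (linkSetoid φ D) a} = 1) :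
    D = ⊥ ∧ (a : G) + a = 0 := by
  have : Subsingleton _ := (Nat.card_eq_one_iff_unique.mp h).1
  have heq (b : {x // φ x = 1}) (hb : (b : G) - a ∈ D ∨ (b : G) + a ∈ D) : (b : G) = a := by
    have := Subsingleton.elim
      (α := {b // Quotient.mk (linkSetoid φ D) b = Quotient.mk _ a}) ⟨b, Quotient.sound hb⟩ ⟨a, rfl⟩
    exact congrArg (fun c => (c.1 : G)) this
  refine ⟨D.eq_bot_iff_forall.mpr fun d hd => ?_, ?_⟩
  · have hφ : φ (a + d) = 1 := by rw [map_add, a.2, hDφ hd, add_zero]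
    simpa using heq ⟨a + d, hφ⟩ (Or.inl (by simpa using hd))
  · have hφ : φ (-a) = 1 := by rw [map_neg, a.2]; decide
    exact neg_eq_iff_add_eq_zero.mp (heq ⟨-a, hφ⟩ (Or.inr (by simp [D.zero_mem])))

theorem eq_of_card_fiber_linkSetoid_eq_one (hDφ : D ≤ φ.ker)
    (hD : D = ⊥ → ∀ t, φ t = 0 → t + t = 0 → t = 0) {q q' : Quotient (linkSetoid φ D)}
    (hq : Nat.card {a // Quotient.mk _ a = q} = 1)
    (hq' : Nat.card {a // Quotient.mk _ a = q'} = 1) :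
    q = q' := by
  obtain ⟨a, rfl⟩ := Quotient.exists_rep q
  obtain ⟨a', rfl⟩ := Quotient.exists_rep q'
  obtain ⟨hbot, ha⟩ := eq_bot_and_add_self_eq_zero_of_card_fiber_eq_one hDφ hq
  obtain ⟨-, ha'⟩ := eq_bot_and_add_self_eq_zero_of_card_fiber_eq_one hDφ hq'
  have : (a : G) - a' = 0 := hD hbot _ (by rw [map_sub, a.2, a'.2, sub_self])
    (by rw [sub_add_sub_comm, ha, ha', sub_zero])
  exact Quotient.sound (Or.inl (this ▸ D.zero_mem))

theorem card_pi_fiber_linkSetoid_le [Finite G] (hDφ : D ≤ φ.ker) (hD2 : Nat.card D ≤ 2) :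
    Nat.card (∀ q : Quotient (linkSetoid φ D), {a // Quotient.mk _ a = q}) ≤
      Nat.card {S : Set G // IsMaxDistSumFree S} := by
  have hS (f : ∀ q : Quotient (linkSetoid φ D), {a // Quotient.mk _ a = q}) :
      IsDistSumFree ((D : Set G) ∪ Set.range fun q => ((f q : {x // φ x = 1}) : G)) := by
    refine isDistSumFree_union hDφ hD2 (by rintro _ ⟨q, rfl⟩; exact (f q).1.2) ?_
    rintro _ ⟨q, rfl⟩ _ ⟨q', rfl⟩ h
    obtain rfl : q = q' := (f q).2.symm.trans ((Quotient.sound h).trans (f q').2)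
    rfl
  choose T hST hT using fun f => exists_isMaxDistSumFree_superset (hS f)
  refine Nat.card_le_card_of_injective (fun f => ⟨T f, hT f⟩) fun f g hfg => funext fun q => ?_
  have hmem (f) : ((f q : {x // φ x = 1}) : G) ∈ T f := hST f (Or.inr ⟨q, rfl⟩)
  refine Subtype.ext (Subtype.ext (eq_of_mem_isDistSumFree hDφ (hT f).1
    (Set.subset_union_left.trans (hST f)) (hmem f) ?_ (f q).1.2 (g q).1.2
    (Quotient.exact ((f q).2.trans (g q).2.symm))))
  have hTfg : T f = T g := congrArg Subtype.val hfg
  exact hTfg ▸ hmem g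

theorem two_pow_card_le_two_mul_card_isMaxDistSumFree_sq [Finite G] (hDφ : D ≤ φ.ker)
    (hD2 : Nat.card D ≤ 2) (hD : D = ⊥ → ∀ t, φ t = 0 → t + t = 0 → t = 0) :
    2 ^ Nat.card {x // φ x = 1} ≤ 2 * Nat.card {S : Set G // IsMaxDistSumFree S} ^ 2 := by
  have := Fintype.ofFinite (Quotient (linkSetoid φ D))
  let m (q : Quotient (linkSetoid φ D)) : ℕ := Nat.card {a // Quotient.mk _ a = q}
  have hm1 (q) : 1 ≤ m q := by
    obtain ⟨a, rfl⟩ := Quotient.exists_rep q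
    exact Nat.card_pos_iff.mpr ⟨⟨⟨a, rfl⟩⟩, inferInstance⟩
  calc 2 ^ Nat.card {x // φ x = 1} = 2 ^ ∑ q, m q := by
        rw [← Nat.card_sigma, Nat.card_congr (Equiv.sigmaFiberEquiv _)]
    _ ≤ 2 * (∏ q, m q) ^ 2 := two_pow_sum_le_two_mul_prod_sq m hm1
        (fun q => (card_fiber_linkSetoid_le q).trans (by omega))
        (fun _ _ => eq_of_card_fiber_linkSetoid_eq_one hDφ hD)
    _ = 2 * Nat.card (∀ q, {a // Quotient.mk (linkSetoid φ D) a = q}) ^ 2 := by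
        rw [Nat.card_pi]
    _ ≤ _ := by gcongr; exact card_pi_fiber_linkSetoid_le hDφ hD2

end

theorem two_rpow_le_of_two_pow_le_two_mul_sq {k N : ℕ} (h : 2 ^ k ≤ 2 * N ^ 2) :
    (2 : ℝ) ^ (((k : ℝ) - 1) / 2) ≤ N := by
  rw [← pow_le_pow_iff_left₀ (by positivity) (by positivity) two_ne_zero, ← Real.rpow_natCast,
    ← Real.rpow_mul zero_le_two, Nat.cast_ofNat, div_mul_cancel₀ _ two_ne_zero,
    Real.rpow_sub_one two_ne_zero, Real.rpow_natCast, div_le_iff₀ two_pos, mul_comm]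
  exact_mod_cast h

/-- every finite abelian group of even order `n` has at least
`2^{(n-2)/4}` maximal distinct sum-free subsets. -/
theorem stmt15 (G : Type*) [AddCommGroup G] [Fintype G]
    (heven : Even (Fintype.card G)) :
    (2 : ℝ) ^ (((Fintype.card G : ℝ) - 2) / 4) ≤
      Nat.card {S : Set G // IsMaxDistSumFree S} := by
  rw [← Nat.card_eq_fintype_card] at heven ⊢
  obtain ⟨φ, a, ha⟩ := exists_addMonoidHom_zmod_two_eq_one heven
  obtain ⟨D, hDφ, hD2, hD⟩ := exists_addSubgroup_le_ker_card_le_two φ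
  have hcard : (Nat.card G : ℝ) = 2 * Nat.card {x // φ x = 1} := by
    exact_mod_cast card_eq_two_mul_card_preimage_one φ ha
  calc (2 : ℝ) ^ (((Nat.card G : ℝ) - 2) / 4)
      = 2 ^ (((Nat.card {x // φ x = 1} : ℝ) - 1) / 2) := by rw [hcard]; ring_nf
    _ ≤ _ := two_rpow_le_of_two_pow_le_two_mul_sq
        (two_pow_card_le_two_mul_card_isMaxDistSumFree_sq hDφ hD2 hD)
end

section
/- Let G be a finite abelian group of even order, H an index-2 subgroup, A = G \ H the nontrivial coset, and s ∈ H an element of order 2. Then the coset A is sum-free, and the graph on vertex set A in which x and y are joined whenever {x, y, t} is a distinct Schur triple for some t ∈ {0, s} has all connected components equal to either a 4-clique {x, x+s, −x, s−x} (when 2x ∉ {0, s}) or a single edge ({x, x+s} when 2x = 0, or {x, −x} when 2x = s). -/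
/-!
The Schur triples through `t ∈ {0, s}` say exactly that `y - x` or `y + x` lies in the
subgroup `{0, s}` of `H`, i.e. `y = ±x + t`. This is an equivalence relation (the orbit relation of
the Klein group generated by `x ↦ -x` and `x ↦ x + s`) which preserves `G \ H`, and the class of
`x` is `{x, x + s, -x, s - x}`. So the components of the link graph are these classes, each one is
a clique, and when `2x ∈ {0, s}` the class collapses to two elements.
-/

/-- The distinct link graph of `{0, s}` on the nontrivial coset `A = G \ H`,
realised on vertex set `G`: `x ≠ y` are adjacent iff both lie outside `H` and
`{x, y, t}` is a distinct Schur triple for some `t ∈ {0, s}`. -/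
def cosetLinkGraph (G : Type*) [AddCommGroup G] (H : AddSubgroup G) (s : G) :
    SimpleGraph G where
  Adj x y := x ≠ y ∧ x ∉ H ∧ y ∉ H ∧ ∃ t ∈ ({0, s} : Set G),
    x ≠ t ∧ y ≠ t ∧ (x + y = t ∨ x + t = y ∨ y + t = x)
  symm := by
    constructor
    rintro x y ⟨hxy, hx, hy, t, ht, hxt, hyt, h⟩
    refine ⟨hxy.symm, hy, hx, t, ht, hyt, hxt, ?_⟩
    rcases h with h | h | h
    · exact Or.inl (by rw [add_comm]; exact h)
    · exact Or.inr (Or.inr h)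
    · exact Or.inr (Or.inl h)
  loopless := by constructor; rintro x ⟨h, -⟩; exact h rfl

section

variable {G : Type*} [AddCommGroup G]

def SameCosetUpToSign (K : AddSubgroup G) (x y : G) : Prop :=
  y - x ∈ K ∨ y + x ∈ K

namespace SameCosetUpToSign

variable {K : AddSubgroup G}

theorem refl (x : G) : SameCosetUpToSign K x x :=
  Or.inl (by simp)

theorem symm {x y : G} : SameCosetUpToSign K x y → SameCosetUpToSign K y x := by
  rintro (h | h)
  · exact Or.inl (by simpa using K.neg_mem h)
  · exact Or.inr (by rwa [add_comm])

theorem trans {x y z : G} :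
    SameCosetUpToSign K x y → SameCosetUpToSign K y z → SameCosetUpToSign K x z := by
  rintro (hxy | hxy) (hyz | hyz)
  · exact Or.inl (by convert K.add_mem hyz hxy using 1; abel)
  · exact Or.inr (by convert K.sub_mem hyz hxy using 1; abel)
  · exact Or.inr (by convert K.add_mem hyz hxy using 1; abel)
  · exact Or.inl (by convert K.sub_mem hyz hxy using 1; abel)

theorem equivalence : Equivalence (SameCosetUpToSign K) :=
  ⟨refl, symm, trans⟩

theorem notMem {H : AddSubgroup G} (hKH : K ≤ H) {x y : G} (hx : x ∉ H)
    (h : SameCosetUpToSign K x y) : y ∉ H := by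
  rintro hy
  rcases h with h | h
  · exact hx (by simpa using H.sub_mem hy (hKH h))
  · exact hx (by simpa using H.sub_mem (hKH h) hy)

end SameCosetUpToSign

def pairSubgroup {s : G} (hss : s + s = 0) : AddSubgroup G where
  carrier := {0, s}
  add_mem' := by rintro _ _ (rfl | rfl) (rfl | rfl) <;> simp [hss]
  zero_mem' := by simp
  neg_mem' := by rintro _ (rfl | rfl) <;> simp [neg_eq_of_add_eq_zero_left hss]

theorem pairSubgroup_le {H : AddSubgroup G} {s : G} (hsH : s ∈ H) (hss : s + s = 0) :
    pairSubgroup hss ≤ H := by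
  rintro t ((rfl | rfl) : t = 0 ∨ t = s)
  exacts [H.zero_mem, hsH]

theorem mem_pairSubgroup {s : G} (hss : s + s = 0) {t : G} :
    t ∈ pairSubgroup hss ↔ t = 0 ∨ t = s :=
  Iff.rfl

theorem setOf_sameCosetUpToSign_pairSubgroup {s : G} (hss : s + s = 0) (x : G) :
    {y | SameCosetUpToSign (pairSubgroup hss) x y} = {x, x + s, -x, s - x} := by
  ext y
  simp only [SameCosetUpToSign, mem_pairSubgroup, Set.mem_insert_iff, Set.mem_singleton_iff,
    Set.mem_ofPred_eq, zero_add, sub_eq_iff_eq_add, add_eq_zero_iff_eq_neg, eq_sub_iff_add_eq,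
    add_comm s, or_assoc]

section cosetLinkGraph

variable {H : AddSubgroup G} {s : G}

theorem cosetLinkGraph_adj_iff (hsH : s ∈ H) (hss : s + s = 0) {x y : G} :
    (cosetLinkGraph G H s).Adj x y ↔
      x ≠ y ∧ x ∉ H ∧ y ∉ H ∧ SameCosetUpToSign (pairSubgroup hss) x y := by
  have hne {a t : G} (ha : a ∉ H) (ht : t ∈ pairSubgroup hss) : a ≠ t :=
    (ne_of_mem_of_not_mem (pairSubgroup_le hsH hss ht) ha).symm
  constructor
  · rintro ⟨hxy, hx, hy, t, ht, -, -, h⟩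
    have ht : t ∈ pairSubgroup hss := ht
    refine ⟨hxy, hx, hy, ?_⟩
    rcases h with h | h | h
    · exact Or.inr (by rwa [add_comm, h])
    · exact Or.inl (by rwa [← h, add_sub_cancel_left])
    · exact Or.inl (by rw [← h, sub_add_cancel_left]; exact neg_mem ht)
  · rintro ⟨hxy, hx, hy, h | h⟩
    · exact ⟨hxy, hx, hy, y - x, h, hne hx h, hne hy h, Or.inr (Or.inl (add_sub_cancel x y))⟩
    · exact ⟨hxy, hx, hy, y + x, h, hne hx h, hne hy h, Or.inl (add_comm x y)⟩

theorem setOf_reachable_cosetLinkGraph (hsH : s ∈ H) (hss : s + s = 0) {x : G} (hx : x ∉ H) :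
    {y | (cosetLinkGraph G H s).Reachable x y} =
      {y | SameCosetUpToSign (pairSubgroup hss) x y} := by
  ext y
  refine ⟨fun h => ?_, fun h => ?_⟩
  · exact Relation.reflTransGen_le_of_equivalence_of_le SameCosetUpToSign.equivalence
      (fun a b hab => ((cosetLinkGraph_adj_iff hsH hss).1 hab).2.2.2) x y
      ((SimpleGraph.reachable_iff_reflTransGen x y).1 h)
  · obtain rfl | hxy := eq_or_ne x y
    · exact SimpleGraph.Reachable.refl x
    · exact SimpleGraph.Adj.reachable <| (cosetLinkGraph_adj_iff hsH hss).2
        ⟨hxy, hx, h.notMem (pairSubgroup_le hsH hss) hx, h⟩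

theorem isClique_cosetLinkGraph (hsH : s ∈ H) (hss : s + s = 0) {x : G} (hx : x ∉ H) :
    (cosetLinkGraph G H s).IsClique {y | SameCosetUpToSign (pairSubgroup hss) x y} := by
  intro a ha b hb hab
  have hK := pairSubgroup_le hsH hss
  exact (cosetLinkGraph_adj_iff hsH hss).2
    ⟨hab, ha.notMem hK hx, hb.notMem hK hx, ha.symm.trans hb⟩

end cosetLinkGraph

end

theorem stmt16_general (G : Type*) [AddCommGroup G] (H : AddSubgroup G)
    (hH : H.index = 2)
    (s : G) (hsH : s ∈ H) (hs0 : s ≠ 0) (hss : s + s = 0) :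
    (∀ a : G, a ∉ H → ∀ b : G, b ∉ H → a + b ∈ H) ∧
    ∀ x : G, x ∉ H →
      ((x + x ≠ 0 ∧ x + x ≠ s) →
        {y : G | (cosetLinkGraph G H s).Reachable x y} = {x, x + s, -x, s - x} ∧
        (cosetLinkGraph G H s).IsClique {x, x + s, -x, s - x}) ∧
      (x + x = 0 →
        {y : G | (cosetLinkGraph G H s).Reachable x y} = {x, x + s} ∧
        (cosetLinkGraph G H s).Adj x (x + s)) ∧
      (x + x = s →
        {y : G | (cosetLinkGraph G H s).Reachable x y} = {x, -x} ∧
        (cosetLinkGraph G H s).Adj x (-x)) := by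
  refine ⟨fun a ha b hb =>
    (AddSubgroup.add_mem_iff_of_index_two hH).2 (iff_of_false ha hb), fun x hx => ?_⟩
  have hcomp := setOf_reachable_cosetLinkGraph hsH hss hx
  have hclique := isClique_cosetLinkGraph hsH hss hx
  rw [setOf_sameCosetUpToSign_pairSubgroup] at hcomp hclique
  refine ⟨fun _ => ⟨hcomp, hclique⟩, fun h0 => ?_, fun h1 => ?_⟩
  · have hneg : -x = x := neg_eq_of_add_eq_zero_left h0
    have hsub : s - x = x + s := by rw [sub_eq_add_neg, hneg, add_comm]
    have hpair : ({x, x + s, -x, s - x} : Set G) = {x, x + s} := by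
      rw [hneg, hsub]; ext; simp
    refine ⟨hcomp.trans hpair, hclique (by simp) (by simp) ?_⟩
    simpa using hs0
  · have hneg : x + s = -x := by
      rw [eq_neg_iff_add_eq_zero, add_right_comm, h1, hss]
    have hsub : s - x = x := by rw [← h1]; abel
    have hpair : ({x, x + s, -x, s - x} : Set G) = {x, -x} := by
      rw [hneg, hsub]; ext; simp; tauto
    refine ⟨hcomp.trans hpair, hclique (by simp) (by simp) ?_⟩
    exact fun h => hs0 (h1 ▸ add_eq_zero_iff_eq_neg.2 h)

/-- for `G` a finite abelian group of even order, `H` an index-2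
subgroup, `A = G \ H` and `s ∈ H` of order 2: the coset `A` is sum-free, and every
connected component of the distinct link graph of `{0, s}` on `A` is either a
4-clique `{x, x+s, -x, s-x}` (when `2x ∉ {0, s}`), or the edge `{x, x+s}`
(when `2x = 0`), or the edge `{x, -x}` (when `2x = s`). -/
theorem stmt16 (G : Type*) [AddCommGroup G] [Finite G] (H : AddSubgroup G)
    (hH : H.index = 2) (heven : Even (Nat.card G))
    (s : G) (hsH : s ∈ H) (hs0 : s ≠ 0) (hss : s + s = 0) :
    (∀ a : G, a ∉ H → ∀ b : G, b ∉ H → a + b ∈ H) ∧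
    ∀ x : G, x ∉ H →
      ((x + x ≠ 0 ∧ x + x ≠ s) →
        {y : G | (cosetLinkGraph G H s).Reachable x y} = {x, x + s, -x, s - x} ∧
        (cosetLinkGraph G H s).IsClique {x, x + s, -x, s - x}) ∧
      (x + x = 0 →
        {y : G | (cosetLinkGraph G H s).Reachable x y} = {x, x + s} ∧
        (cosetLinkGraph G H s).Adj x (x + s)) ∧
      (x + x = s →
        {y : G | (cosetLinkGraph G H s).Reachable x y} = {x, -x} ∧
        (cosetLinkGraph G H s).Adj x (-x)) :=
  stmt16_general G H hH s hsH hs0 hss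
end

section
/- Let G be a finite abelian group, S ⊆ G finite, and A a coset of an index-2 subgroup H of G not containing 0, with S ⊆ H. In the distinct link graph L*_S[A] (vertices A, with x ≠ y adjacent iff {x,y,s} is a distinct Schur triple for some s ∈ S), every vertex x satisfies: the number of neighbors y with x − y ∈ (S ∪ −S) \ {0} is exactly |(S ∪ −S) \ {0}|, and the number of remaining neighbors y with x + y ∈ S is at most |S|. Consequently |(S ∪ −S) \ {0}| ≤ δ(Γ) ≤ Δ(Γ) ≤ |(S ∪ −S) \ {0}| + |S|. -/
/-!
Every `d ∈ D := (S ∪ -S) \ {0}` lies in `H`, so for `x ∉ H` the element `x - d` is again outside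
`H`, and `{x, x - d, ±d}` is automatically a distinct Schur triple (`±d ∈ H` cannot equal a vertex).
Hence the type-1 neighbours of `x` are exactly the `x - d`, `d ∈ D`. Any other neighbour `y`
must satisfy `x + y ∈ S`, and `y ↦ x + y` is injective, so there are at most `|S|` of them.
-/

def linkGraph {G : Type*} [AddCommGroup G] (B S : Set G) : SimpleGraph B where
  Adj x y := x ≠ y ∧ ∃ s ∈ S, (x : G) ≠ s ∧ (y : G) ≠ s ∧
    ((x : G) + y = s ∨ (x : G) + s = y ∨ (y : G) + s = x)
  symm := by
    refine ⟨?_⟩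
    rintro x y ⟨hxy, s, hs, hxs, hys, h⟩
    refine ⟨hxy.symm, s, hs, hys, hxs, ?_⟩
    rcases h with h | h | h
    · exact Or.inl (by rw [add_comm]; exact h)
    · exact Or.inr (Or.inr h)
    · exact Or.inr (Or.inl h)
  loopless := by refine ⟨?_⟩; rintro x ⟨h, -⟩; exact h rfl

namespace linkGraph

variable {G : Type*} [AddCommGroup G]

theorem sub_mem_of_adj_of_add_notMem {B S : Set G} {x y : B} (hxy : (linkGraph B S).Adj x y)
    (hxyS : (x : G) + y ∉ S) : (x : G) - y ∈ (S ∪ -S) \ {0} := by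
  obtain ⟨hne, s, hs, -, -, h | h | h⟩ := hxy
  · exact absurd (h ▸ hs) hxyS
  · have hs0 : s ≠ 0 := by rintro rfl; exact hne (Subtype.ext (by simpa using h))
    rw [show (x : G) - y = -s by rw [← h]; abel]
    exact ⟨Or.inr (by simpa using hs), by simpa using hs0⟩
  · have hs0 : s ≠ 0 := by rintro rfl; exact hne (Subtype.ext (by simpa using h.symm))
    rw [show (x : G) - y = s by rw [← h]; abel]
    exact ⟨Or.inl hs, hs0⟩

theorem ncard_adj_sub_notMem_le {B S : Set G} (hS : S.Finite) (x : B) :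
    {y : B | (linkGraph B S).Adj x y ∧ (x : G) - y ∉ (S ∪ -S) \ {0}}.ncard ≤ S.ncard :=
  Set.ncard_le_ncard_of_injOn (fun y : B => (x : G) + y)
    (fun _ ⟨hxy, hsub⟩ => not_not.mp fun hxyS => hsub (sub_mem_of_adj_of_add_notMem hxy hxyS))
    (fun _ _ _ _ h => Subtype.ext (add_left_cancel h)) hS

theorem ncard_adj_eq_add (B S : Set G) [Finite B] (x : B) :
    {y : B | (linkGraph B S).Adj x y}.ncard =
      {y : B | (linkGraph B S).Adj x y ∧ (x : G) - y ∈ (S ∪ -S) \ {0}}.ncard +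
        {y : B | (linkGraph B S).Adj x y ∧ (x : G) - y ∉ (S ∪ -S) \ {0}}.ncard :=
  (Set.ncard_inter_add_ncard_sdiff_eq_ncard _ {y : B | (x : G) - y ∈ (S ∪ -S) \ {0}}).symm

variable {H : AddSubgroup G} {S : Set G}

theorem mem_of_mem_symm_sdiff_zero (hS : S ⊆ H) {d : G} (hd : d ∈ (S ∪ -S) \ {0}) : d ∈ H := by
  rcases hd.1 with hd | hd
  · exact hS hd
  · simpa using H.neg_mem (hS hd)

theorem adj_of_sub_mem (hS : S ⊆ H) {x y : {x : G | x ∉ H}}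
    (hxy : (x : G) - y ∈ (S ∪ -S) \ {0}) : (linkGraph {x : G | x ∉ H} S).Adj x y := by
  have hne : x ≠ y := fun h => hxy.2 (by simp [h])
  have ne_of_mem_S : ∀ z : {x : G | x ∉ H}, ∀ s ∈ S, (z : G) ≠ s := fun z s hs h =>
    z.2 (h ▸ hS hs)
  rcases hxy.1 with hd | hd
  · exact ⟨hne, _, hd, ne_of_mem_S x _ hd, ne_of_mem_S y _ hd, Or.inr (Or.inr (by abel))⟩
  · exact ⟨hne, _, hd, ne_of_mem_S x _ hd, ne_of_mem_S y _ hd, Or.inr (Or.inl (by abel))⟩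

theorem ncard_adj_sub_mem (hS : S ⊆ H) (x : {x : G | x ∉ H}) :
    {y : {x : G | x ∉ H} | (linkGraph {x : G | x ∉ H} S).Adj x y ∧
      (x : G) - y ∈ (S ∪ -S) \ {0}}.ncard = ((S ∪ -S) \ {0}).ncard := by
  refine Set.ncard_congr (fun y _ => (x : G) - y) (fun _ hy => hy.2)
    (fun _ _ _ _ h => Subtype.ext (sub_right_injective h)) fun d hd => ?_
  have hxd : (x : G) - d ∉ H := fun h =>
    x.2 (by simpa using H.add_mem h (mem_of_mem_symm_sdiff_zero hS hd))
  have hsub : (x : G) - ((x : G) - d) ∈ (S ∪ -S) \ {0} := by rwa [sub_sub_cancel]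
  exact ⟨⟨_, hxd⟩, ⟨adj_of_sub_mem hS hsub, hsub⟩, sub_sub_cancel _ _⟩

end linkGraph

theorem stmt17_general (G : Type*) [AddCommGroup G] [Finite G] (H : AddSubgroup G)
    (S : Set G) (hS : S ⊆ (H : Set G)) :
    ∀ x : ({x : G | x ∉ H} : Set G),
      {y : ({x : G | x ∉ H} : Set G) | (linkGraph {x : G | x ∉ H} S).Adj x y ∧
          (x : G) - y ∈ (S ∪ -S) \ {0}}.ncard = ((S ∪ -S) \ {0}).ncard ∧
      {y : ({x : G | x ∉ H} : Set G) | (linkGraph {x : G | x ∉ H} S).Adj x y ∧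
          (x : G) - y ∉ (S ∪ -S) \ {0}}.ncard ≤ S.ncard ∧
      ((S ∪ -S) \ {0}).ncard ≤
        {y : ({x : G | x ∉ H} : Set G) | (linkGraph {x : G | x ∉ H} S).Adj x y}.ncard ∧
      {y : ({x : G | x ∉ H} : Set G) | (linkGraph {x : G | x ∉ H} S).Adj x y}.ncard ≤
        ((S ∪ -S) \ {0}).ncard + S.ncard := by
  intro x
  have type1 := linkGraph.ncard_adj_sub_mem hS x
  have type2 := linkGraph.ncard_adj_sub_notMem_le S.toFinite x
  have split := linkGraph.ncard_adj_eq_add {x : G | x ∉ H} S x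
  exact ⟨type1, type2, by omega, by omega⟩

/-- let `A = G \ H` be the coset not containing `0` of an index-2
subgroup `H` and `S ⊆ H` finite. In `L*_S[A]`, every vertex `x` has exactly
`|(S ∪ -S) \ {0}|` neighbours `y` with `x - y ∈ (S ∪ -S) \ {0}` (type-1 edges),
at most `|S|` remaining neighbours (type-2 edges, those with `x + y ∈ S`); hence
`|(S ∪ -S) \ {0}| ≤ δ(Γ) ≤ Δ(Γ) ≤ |(S ∪ -S) \ {0}| + |S|`. -/
theorem stmt17 (G : Type*) [AddCommGroup G] [Finite G] (H : AddSubgroup G)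
    (hH : H.index = 2) (S : Set G) (hS : S ⊆ (H : Set G)) :
    ∀ x : ({x : G | x ∉ H} : Set G),
      {y : ({x : G | x ∉ H} : Set G) | (linkGraph {x : G | x ∉ H} S).Adj x y ∧
          (x : G) - y ∈ (S ∪ -S) \ {0}}.ncard = ((S ∪ -S) \ {0}).ncard ∧
      {y : ({x : G | x ∉ H} : Set G) | (linkGraph {x : G | x ∉ H} S).Adj x y ∧
          (x : G) - y ∉ (S ∪ -S) \ {0}}.ncard ≤ S.ncard ∧
      ((S ∪ -S) \ {0}).ncard ≤
        {y : ({x : G | x ∉ H} : Set G) | (linkGraph {x : G | x ∉ H} S).Adj x y}.ncard ∧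
      {y : ({x : G | x ∉ H} : Set G) | (linkGraph {x : G | x ∉ H} S).Adj x y}.ncard ≤
        ((S ∪ -S) \ {0}).ncard + S.ncard :=
  stmt17_general G H S hS
end
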